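/- arXiv:1805.02851 — 7 statements merged into one kernel-verified Lean document; each statement's English description precedes it below -/
import Mathlib

section
/- Let (V, s, t, c) be a flow network and let f be a maximum flow. Then t ∉ S_f, the set S_f is an s-t cut whose capacity equals the value of f, and S_f is a minimum s-t cut, i.e., cap(S_f) ≤ cap(X) for every s-t cut X. -/
open scoped Classical

/-- A flow network: a finite vertex type with a source `s`, a sink `t` and a
capacity function `c` with no self-loops, no edges into `s` and no edges out of `t`. -/
structure FlowNet (V : Type) [Fintype V] where
  s : V
  t : V
  hst : s ≠ t
  c : V → V → ℕ
  c_self : ∀ v, c v v = 0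
  c_to_s : ∀ v, c v s = 0
  c_from_t : ∀ v, c t v = 0

namespace FlowNet

variable {V : Type} [Fintype V]

/-- `f` is a flow: capacity-respecting and conserving flow at all internal vertices. -/
def IsFlow (N : FlowNet V) (f : V → V → ℕ) : Prop :=
  (∀ u v, f u v ≤ N.c u v) ∧
  ∀ v, v ≠ N.s → v ≠ N.t → (∑ u, f u v) = ∑ u, f v u

/-- The value of a flow: total flow out of the source. -/
def value (N : FlowNet V) (f : V → V → ℕ) : ℕ := ∑ v, f N.s v

/-- `f` is a maximum flow. -/
def IsMaxFlow (N : FlowNet V) (f : V → V → ℕ) : Prop :=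
  N.IsFlow f ∧ ∀ f', N.IsFlow f' → N.value f' ≤ N.value f

/-- Edge of the residual graph of `f`. -/
def ResEdge (N : FlowNet V) (f : V → V → ℕ) (u v : V) : Prop :=
  f u v < N.c u v ∨ 0 < f v u

/-- `S_f`: vertices reachable from `s` in the residual graph of `f`. -/
def Sset (N : FlowNet V) (f : V → V → ℕ) : Set V :=
  {v | Relation.ReflTransGen (N.ResEdge f) N.s v}

/-- `T_f`: vertices from which `t` is reachable in the residual graph of `f`. -/
def Tset (N : FlowNet V) (f : V → V → ℕ) : Set V :=
  {v | Relation.ReflTransGen (N.ResEdge f) v N.t}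

/-- `U_f`: all remaining vertices. -/
def Uset (N : FlowNet V) (f : V → V → ℕ) : Set V :=
  (N.Sset f ∪ N.Tset f)ᶜ

/-- An s-t cut: a set of vertices containing `s` but not `t`. -/
def IsCut (N : FlowNet V) (X : Set V) : Prop :=
  N.s ∈ X ∧ N.t ∉ X

/-- The capacity of a cut. -/
noncomputable def cap (N : FlowNet V) (X : Set V) : ℕ :=
  ∑ u, ∑ v, if u ∈ X ∧ v ∉ X then N.c u v else 0

/-- A minimum s-t cut. -/
def IsMinCut (N : FlowNet V) (X : Set V) : Prop :=
  N.IsCut X ∧ ∀ Y, N.IsCut Y → N.cap X ≤ N.cap Y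

end FlowNet

set_option linter.unusedSectionVars false

section AuxSum
variable {V : Type} [Fintype V]

lemma mySum_ite_add_one (m : V → ℕ) (a : V) :
    ∑ u, (if u = a then m u + 1 else m u) = (∑ u, m u) + 1 := by
  have h : ∀ u, (if u = a then m u + 1 else m u) = m u + (if u = a then 1 else 0) := by
    intro u; split_ifs <;> simp
  simp_rw [h]
  rw [Finset.sum_add_distrib]
  simp

lemma mySum_ite_sub_one (m : V → ℕ) (a : V) (h : 0 < m a) :
    (∑ u, (if u = a then m u - 1 else m u)) + 1 = ∑ u, m u := by
  have hp : ∀ u, (if u = a then m u - 1 else m u) + (if u = a then (1:ℕ) else 0) = m u := by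
    intro u; split_ifs with hh
    · subst hh; omega
    · omega
  have h1 : (∑ u, (if u = a then m u - 1 else m u)) + (∑ u, (if u = a then (1:ℕ) else 0))
      = ∑ u, m u := by
    rw [← Finset.sum_add_distrib]; exact Finset.sum_congr rfl fun u _ => hp u
  simpa using h1

def chainLen (r : V → V → Prop) : ℕ → V → V → Prop
  | 0, a, b => a = b
  | n+1, a, b => ∃ x, r a x ∧ chainLen r n x b

lemma chainLen_snoc {r : V → V → Prop} :
    ∀ {n a b c}, chainLen r n a b → r b c → chainLen r (n+1) a c := by
  intro n
  induction n with
  | zero => intro a b c h hr; exact ⟨c, h ▸ hr, rfl⟩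
  | succ k ih =>
    intro a b c h hr
    obtain ⟨x, hax, hx⟩ := h
    exact ⟨x, hax, ih hx hr⟩

lemma exists_chainLen {r : V → V → Prop} {a b : V} (h : Relation.ReflTransGen r a b) :
    ∃ n, chainLen r n a b := by
  induction h with
  | refl => exact ⟨0, rfl⟩
  | tail _ hr ih => obtain ⟨n, hn⟩ := ih; exact ⟨n+1, chainLen_snoc hn hr⟩

noncomputable def rdist {V : Type} [Fintype V] (N : FlowNet V) (f : V → V → ℕ) (x : V) : ℕ :=
  sInf {n | chainLen (N.ResEdge f) n x N.t}

lemma aug_main (N : FlowNet V) (f : V → V → ℕ) (hf : N.IsFlow f) :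
    ∀ n (x : V), rdist N f x = n → (∃ m, chainLen (N.ResEdge f) m x N.t) →
    ∃ g : V → V → ℕ, (∀ u v, g u v ≤ N.c u v) ∧
      (∀ v, v ≠ x → v ≠ N.t →
        (∑ u, g v u) + (∑ u, f u v) = (∑ u, g u v) + (∑ u, f v u)) ∧
      (x ≠ N.t → (∑ u, g x u) + (∑ u, f u x) = (∑ u, g u x) + (∑ u, f x u) + 1) ∧
      (∀ u v, rdist N f u > n ∨ rdist N f v > n → g u v = f u v) := by
  intro n
  induction n using Nat.strong_induction_on with
  | _ n IH =>
  intro x hdx hreach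
  by_cases hxt : x = N.t
  · subst hxt
    exact ⟨f, hf.1, fun v _ _ => by ring, fun h => absurd rfl h, fun u v _ => rfl⟩
  · have hne : {m | chainLen (N.ResEdge f) m x N.t}.Nonempty := hreach
    have hmem : chainLen (N.ResEdge f) (rdist N f x) x N.t := Nat.sInf_mem hne
    have hd0 : rdist N f x ≠ 0 := by
      intro h0
      rw [h0] at hmem
      exact hxt hmem
    obtain ⟨k, hk⟩ : ∃ k, rdist N f x = k + 1 := ⟨rdist N f x - 1, by omega⟩
    rw [hk] at hmem
    obtain ⟨y, hxy, hyk⟩ := hmem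
    have hdy_le : rdist N f y ≤ k := Nat.sInf_le hyk
    have hymem : chainLen (N.ResEdge f) (rdist N f y) y N.t := Nat.sInf_mem (⟨k, hyk⟩ : {n | chainLen (N.ResEdge f) n y N.t}.Nonempty)
    have hdx_le : rdist N f x ≤ rdist N f y + 1 := Nat.sInf_le ⟨y, hxy, hymem⟩
    have hdy : rdist N f y = k := by omega
    obtain ⟨g, hgc, hgcons, hgex, hginv⟩ := IH k (by omega) y hdy ⟨k, hyk⟩
    have hxy_ne : x ≠ y := by
      intro h; rw [h, hdy] at hk; omega
    have hgxy : g x y = f x y := hginv x y (Or.inl (by omega))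
    have hgyx : g y x = f y x := hginv y x (Or.inr (by omega))
    rcases hxy with hfwd | hbwd
    · -- forward edge: f x y < c x y
      have hrow : (∑ u, if x = x ∧ u = y then g x u + 1 else g x u) = (∑ u, g x u) + 1 := by
        simp only [true_and]; exact mySum_ite_add_one (g x) y
      have hcol : (∑ u, if u = x ∧ y = y then g u y + 1 else g u y) = (∑ u, g u y) + 1 := by
        simp only [and_true]; exact mySum_ite_add_one (fun u => g u y) x
      have hrowo : ∀ v, v ≠ x → (∑ u, if v = x ∧ u = y then g v u + 1 else g v u)
          = ∑ u, g v u := by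
        intro v hv
        exact Finset.sum_congr rfl fun u _ => by simp [hv]
      have hcolo : ∀ v, v ≠ y → (∑ u, if u = x ∧ v = y then g u v + 1 else g u v)
          = ∑ u, g u v := by
        intro v hv
        exact Finset.sum_congr rfl fun u _ => by simp [hv]
      refine ⟨fun u v => if u = x ∧ v = y then g u v + 1 else g u v, ?_, ?_, ?_, ?_⟩
      · intro u v
        dsimp only
        split_ifs with h
        · obtain ⟨hu, hv⟩ := h; subst hu; subst hv
          rw [hgxy]; omega
        · exact hgc u v
      · intro v hvx hvt
        dsimp only
        by_cases hvy : v = y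
        · subst hvy
          rw [hrowo v hvx, hcol]
          have := hgex hvt
          omega
        · rw [hrowo v hvx, hcolo v hvy]
          exact hgcons v hvy hvt
      · intro _
        dsimp only
        rw [hrow, hcolo x hxy_ne]
        have := hgcons x hxy_ne hxt
        omega
      · intro u v h
        dsimp only
        by_cases huv : u = x ∧ v = y
        · exfalso
          obtain ⟨hu, hv⟩ := huv; subst hu; subst hv
          rw [hk] at h; omega
        · simp only [huv, if_false]
          refine hginv u v ?_
          rcases h with h | h
          · exact Or.inl (by omega)
          · exact Or.inr (by omega)
    · -- backward edge: 0 < f y x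
      have hgyx_pos : 0 < g y x := by rw [hgyx]; exact hbwd
      have hrow : (∑ u, if y = y ∧ u = x then g y u - 1 else g y u) + 1 = ∑ u, g y u := by
        simp only [true_and]; exact mySum_ite_sub_one (g y) x hgyx_pos
      have hcol : (∑ u, if u = y ∧ x = x then g u x - 1 else g u x) + 1 = ∑ u, g u x := by
        simp only [and_true]; exact mySum_ite_sub_one (fun u => g u x) y hgyx_pos
      have hrowo : ∀ v, v ≠ y → (∑ u, if v = y ∧ u = x then g v u - 1 else g v u)
          = ∑ u, g v u := by
        intro v hv
        exact Finset.sum_congr rfl fun u _ => by simp [hv]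
      have hcolo : ∀ v, v ≠ x → (∑ u, if u = y ∧ v = x then g u v - 1 else g u v)
          = ∑ u, g u v := by
        intro v hv
        exact Finset.sum_congr rfl fun u _ => by simp [hv]
      refine ⟨fun u v => if u = y ∧ v = x then g u v - 1 else g u v, ?_, ?_, ?_, ?_⟩
      · intro u v
        dsimp only
        split_ifs with h
        · exact le_trans (Nat.sub_le _ _) (hgc u v)
        · exact hgc u v
      · intro v hvx hvt
        dsimp only
        by_cases hvy : v = y
        · subst hvy
          rw [hcolo v hvx]
          have := hgex hvt
          omega
        · rw [hrowo v hvy, hcolo v hvx]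
          exact hgcons v hvy hvt
      · intro _
        dsimp only
        rw [hrowo x hxy_ne]
        have := hgcons x hxy_ne hxt
        omega
      · intro u v h
        dsimp only
        by_cases huv : u = y ∧ v = x
        · exfalso
          obtain ⟨hu, hv⟩ := huv; subst hu; subst hv
          rw [hk] at h; omega
        · simp only [huv, if_false]
          refine hginv u v ?_
          rcases h with h | h
          · exact Or.inl (by omega)
          · exact Or.inr (by omega)
end AuxSum

section Rest
variable {V : Type} [Fintype V]

lemma t_not_mem_Sset (N : FlowNet V) (f : V → V → ℕ) (hmax : N.IsMaxFlow f) :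
    N.t ∉ N.Sset f := by
  intro ht
  obtain ⟨m, hm⟩ := exists_chainLen ht
  obtain ⟨g, hgc, hgcons, hgex, _⟩ :=
    aug_main N f hmax.1 (rdist N f N.s) N.s rfl ⟨m, hm⟩
  have hgflow : N.IsFlow g := by
    refine ⟨hgc, fun v hvs hvt => ?_⟩
    have h1 := hgcons v hvs hvt
    have h2 := hmax.1.2 v hvs hvt
    omega
  have hfs : (∑ u, f u N.s) = 0 :=
    Finset.sum_eq_zero fun u _ => Nat.le_zero.1 ((hmax.1.1 u N.s).trans_eq (N.c_to_s u))
  have hgs : (∑ u, g u N.s) = 0 :=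
    Finset.sum_eq_zero fun u _ => Nat.le_zero.1 ((hgc u N.s).trans_eq (N.c_to_s u))
  have hex := hgex N.hst
  have hle := hmax.2 g hgflow
  unfold FlowNet.value at hle
  omega

lemma flow_cut (N : FlowNet V) (f : V → V → ℕ) (hf : N.IsFlow f) (X : Set V)
    (hX : N.IsCut X) :
    (∑ u, ∑ v, if u ∈ X ∧ v ∉ X then f u v else 0)
      = N.value f + ∑ u, ∑ v, if u ∈ X ∧ v ∉ X then f v u else 0 := by
  have key : ∀ u, (if u ∈ X then ∑ v, f u v else 0)
      = (if u ∈ X then ∑ v, f v u else 0) + (if u = N.s then N.value f else 0) := by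
    intro u
    by_cases hu : u ∈ X
    · by_cases hus : u = N.s
      · subst hus
        have h0 : (∑ v, f v N.s) = 0 :=
          Finset.sum_eq_zero fun v _ => Nat.le_zero.1 ((hf.1 v N.s).trans_eq (N.c_to_s v))
        simp [hu, h0, FlowNet.value]
      · have hut : u ≠ N.t := fun h => hX.2 (h ▸ hu)
        simp [hu, hus, hf.2 u hus hut]
    · have hus : u ≠ N.s := fun h => hu (h ▸ hX.1)
      simp [hu, hus]
  have hsum : (∑ u, if u ∈ X then ∑ v, f u v else 0)
      = (∑ u, if u ∈ X then ∑ v, f v u else 0) + N.value f := by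
    simp_rw [key]
    rw [Finset.sum_add_distrib]
    simp
  have split1 : ∀ u, (if u ∈ X then ∑ v, f u v else 0)
      = (∑ v, if u ∈ X ∧ v ∈ X then f u v else 0)
        + ∑ v, if u ∈ X ∧ v ∉ X then f u v else 0 := by
    intro u
    by_cases hu : u ∈ X
    · simp only [hu, if_true, true_and]
      rw [← Finset.sum_add_distrib]
      exact Finset.sum_congr rfl fun v _ => by split_ifs <;> simp_all
    · simp [hu]
  have split2 : ∀ u, (if u ∈ X then ∑ v, f v u else 0)
      = (∑ v, if u ∈ X ∧ v ∈ X then f v u else 0)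
        + ∑ v, if u ∈ X ∧ v ∉ X then f v u else 0 := by
    intro u
    by_cases hu : u ∈ X
    · simp only [hu, if_true, true_and]
      rw [← Finset.sum_add_distrib]
      exact Finset.sum_congr rfl fun v _ => by split_ifs <;> simp_all
    · simp [hu]
  have hcomm : (∑ u, ∑ v, if u ∈ X ∧ v ∈ X then f u v else 0)
      = ∑ u, ∑ v, if u ∈ X ∧ v ∈ X then f v u else 0 := by
    rw [Finset.sum_comm]
    exact Finset.sum_congr rfl fun v _ => Finset.sum_congr rfl fun u _ =>
      if_congr and_comm rfl rfl
  simp_rw [split1, split2, Finset.sum_add_distrib] at hsum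
  rw [hcomm] at hsum
  omega

lemma weak_duality (N : FlowNet V) (f : V → V → ℕ) (hf : N.IsFlow f) (X : Set V)
    (hX : N.IsCut X) : N.value f ≤ N.cap X := by
  have h1 := flow_cut N f hf X hX
  have h2 : (∑ u, ∑ v, if u ∈ X ∧ v ∉ X then f u v else 0) ≤ N.cap X := by
    refine Finset.sum_le_sum fun u _ => Finset.sum_le_sum fun v _ => ?_
    split_ifs
    · exact hf.1 u v
    · exact le_refl 0
  omega

lemma cap_Sset (N : FlowNet V) (f : V → V → ℕ) (hf : N.IsFlow f)
    (ht : N.t ∉ N.Sset f) : N.cap (N.Sset f) = N.value f := by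
  have hcut : N.IsCut (N.Sset f) := ⟨Relation.ReflTransGen.refl, ht⟩
  have hedge : ∀ u v, u ∈ N.Sset f → v ∉ N.Sset f → f u v = N.c u v ∧ f v u = 0 := by
    intro u v hu hv
    have hne : ¬ N.ResEdge f u v := fun h => hv (hu.tail h)
    unfold FlowNet.ResEdge at hne
    push_neg at hne
    exact ⟨le_antisymm (hf.1 u v) hne.1, by omega⟩
  have hFout : (∑ u, ∑ v, if u ∈ N.Sset f ∧ v ∉ N.Sset f then f u v else 0)
      = N.cap (N.Sset f) := by
    unfold FlowNet.cap
    refine Finset.sum_congr rfl fun u _ => Finset.sum_congr rfl fun v _ => ?_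
    split_ifs with h
    · exact (hedge u v h.1 h.2).1
    · rfl
  have hFin : (∑ u, ∑ v, if u ∈ N.Sset f ∧ v ∉ N.Sset f then f v u else 0) = 0 := by
    refine Finset.sum_eq_zero fun u _ => Finset.sum_eq_zero fun v _ => ?_
    split_ifs with h
    · exact (hedge u v h.1 h.2).2
    · rfl
  have := flow_cut N f hf (N.Sset f) hcut
  omega

end Rest



/-- for a maximum flow `f`, `t ∉ S_f`, the set `S_f` is an s-t cut whose
capacity equals the value of `f`, and `S_f` is a minimum s-t cut. -/
theorem stmt0 {V : Type} [Fintype V] (N : FlowNet V) (f : V → V → ℕ)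
    (hf : N.IsMaxFlow f) :
    N.t ∉ N.Sset f ∧ N.IsCut (N.Sset f) ∧ N.cap (N.Sset f) = N.value f ∧
      N.IsMinCut (N.Sset f) := by
  have ht := t_not_mem_Sset N f hf
  have hcut : N.IsCut (N.Sset f) := ⟨Relation.ReflTransGen.refl, ht⟩
  have hcap := cap_Sset N f hf.1 ht
  refine ⟨ht, hcut, hcap, hcut, fun Y hY => ?_⟩
  rw [hcap]
  exact weak_duality N f hf.1 Y hY
end

section
/- Let (V, s, t, c) be a flow network and let f be a maximum flow. Then S_f ∩ T_f = ∅; consequently the three sets S_f, T_f and U_f are pairwise disjoint and their union is V, i.e., they form a partition of the vertex set. -/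
/-!
If `t` were reachable from `s` in the residual graph of a maximum flow `f`, take a residual
path without repeated vertices and push one unit along each of its edges: forward along an
unsaturated edge, backward along an edge carrying flow. Each push respects the capacities and
changes the net inflow only at the two ends of its edge, so the result is a flow of value
`value f + 1`. Hence `S_f` and `T_f` are disjoint, and `U_f` is their complement.
-/

open scoped Classical

theorem List.exists_isChain_cons_nodup_of_relationReflTransGen {α : Type*} {r : α → α → Prop}
    {a b : α} (h : Relation.ReflTransGen r a b) :
    ∃ l, IsChain r (a :: l) ∧ (a :: l).Nodup ∧ getLast (a :: l) (cons_ne_nil _ _) = b := by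
  induction h using Relation.ReflTransGen.head_induction_on with
  | refl => exact ⟨[], .singleton _, nodup_singleton _, rfl⟩
  | @head a c hac _ ih =>
    obtain ⟨l, hch, hnd, hlast⟩ := ih
    by_cases ha : a ∈ c :: l
    · obtain ⟨l₁, l₂, hsplit⟩ := append_of_mem ha
      rw [hsplit] at hch hnd
      refine ⟨l₂, hch.right_of_append, hnd.of_append_right, ?_⟩
      simp only [← hlast, hsplit, getLast_append_of_ne_nil _ (cons_ne_nil _ _)]
    · exact ⟨c :: l, hch.cons_cons hac, nodup_cons.2 ⟨ha, hnd⟩, by rwa [getLast_cons_cons]⟩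

namespace FlowNet

variable {V : Type} [Fintype V]

def excess (g : V → V → ℕ) (w : V) : ℤ :=
  ∑ u, ((g u w : ℤ) - g w u)

theorem excess_eq_of_sub_eq {g g' : V → V → ℕ} {v u : V}
    (h : ∀ a b, (g' a b : ℤ) - g' b a = g a b - g b a
      + (if a = v ∧ b = u then 1 else 0) - (if a = u ∧ b = v then 1 else 0)) (w : V) :
    excess g' w = excess g w + (if w = u then 1 else 0) - (if w = v then 1 else 0) := by
  simp [excess, h, Finset.sum_add_distrib, Finset.sum_sub_distrib, ite_and]

theorem exists_push (N : FlowNet V) {g : V → V → ℕ} (hg : ∀ a b, g a b ≤ N.c a b) {v u : V}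
    (he : N.ResEdge g v u) :
    ∃ g' : V → V → ℕ, (∀ a b, g' a b ≤ N.c a b) ∧ (∀ a b, a ≠ v → b ≠ v → g' a b = g a b) ∧
      ∀ w, excess g' w = excess g w + (if w = u then 1 else 0) - (if w = v then 1 else 0) := by
  by_cases hfwd : g v u < N.c v u
  · refine ⟨fun a b => if a = v ∧ b = u then g a b + 1 else g a b, fun a b => ?_,
      fun a b ha _ => by simp [ha], excess_eq_of_sub_eq fun a b => ?_⟩
    · grind
    · grind
  · have hbwd : 0 < g u v := he.resolve_left hfwd
    refine ⟨fun a b => if a = u ∧ b = v then g a b - 1 else g a b, fun a b => ?_,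
      fun a b _ hb => by simp [hb], excess_eq_of_sub_eq fun a b => ?_⟩
    · grind
    · grind

theorem exists_augment_of_isChain (N : FlowNet V) {z : V} :
    ∀ (l : List V) {g : V → V → ℕ} {v : V}, (∀ a b, g a b ≤ N.c a b) →
      (v :: l).IsChain (N.ResEdge g) → (v :: l).Nodup →
      (v :: l).getLast (List.cons_ne_nil _ _) = z →
      ∃ g' : V → V → ℕ, (∀ a b, g' a b ≤ N.c a b) ∧
        ∀ w, excess g' w = excess g w + (if w = z then 1 else 0) - (if w = v then 1 else 0)
  | [], g, v, hg, _, _, hlast => ⟨g, hg, fun w => by simp [← hlast]⟩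
  | u :: l, g, v, hg, hch, hnd, hlast => by
    rw [List.isChain_cons_cons] at hch
    obtain ⟨hvl, hnd⟩ := List.nodup_cons.1 hnd
    obtain ⟨g₁, hg₁, hg₁_eq, hex₁⟩ := N.exists_push hg hch.1
    -- `v` does not occur in `u :: l`, so the push leaves the rest of the path residual.
    have hch₁ : (u :: l).IsChain (N.ResEdge g₁) := hch.2.imp_of_mem_imp fun x y hx hy hxy => by
      have hxv : x ≠ v := by rintro rfl; exact hvl hx
      have hyv : y ≠ v := by rintro rfl; exact hvl hy
      rwa [ResEdge, hg₁_eq x y hxv hyv, hg₁_eq y x hyv hxv]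
    obtain ⟨g', hg', hex'⟩ := exists_augment_of_isChain N l hg₁ hch₁ hnd hlast
    exact ⟨g', hg', fun w => by rw [hex', hex₁]; ring⟩

theorem exists_augment (N : FlowNet V) {g : V → V → ℕ} (hg : ∀ a b, g a b ≤ N.c a b) {v z : V}
    (h : Relation.ReflTransGen (N.ResEdge g) v z) :
    ∃ g' : V → V → ℕ, (∀ a b, g' a b ≤ N.c a b) ∧
      ∀ w, excess g' w = excess g w + (if w = z then 1 else 0) - (if w = v then 1 else 0) :=
  have ⟨l, hch, hnd, hlast⟩ := List.exists_isChain_cons_nodup_of_relationReflTransGen h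
  N.exists_augment_of_isChain l hg hch hnd hlast

theorem isFlow_iff (N : FlowNet V) {g : V → V → ℕ} :
    N.IsFlow g ↔ (∀ a b, g a b ≤ N.c a b) ∧ ∀ w, w ≠ N.s → w ≠ N.t → excess g w = 0 := by
  simp only [IsFlow, excess, Finset.sum_sub_distrib, sub_eq_zero]
  norm_cast

theorem excess_source (N : FlowNet V) {g : V → V → ℕ} (hg : ∀ a b, g a b ≤ N.c a b) :
    excess g N.s = -N.value g := by
  have hin : ∀ u, g u N.s = 0 := fun u => Nat.le_zero.1 (N.c_to_s u ▸ hg u N.s)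
  simp [excess, value, hin]

theorem not_reflTransGen_source_sink (N : FlowNet V) {f : V → V → ℕ} (hf : N.IsMaxFlow f) :
    ¬ Relation.ReflTransGen (N.ResEdge f) N.s N.t := by
  intro h
  obtain ⟨⟨hfc, hfex⟩, hmax⟩ := And.imp_left N.isFlow_iff.1 hf
  obtain ⟨g, hg, hex⟩ := N.exists_augment hfc h
  have hflow : N.IsFlow g :=
    N.isFlow_iff.2 ⟨hg, fun w hs ht => by simp [hex, hfex w hs ht, hs, ht]⟩
  have hval := hex N.s
  rw [N.excess_source hg, N.excess_source hfc, if_neg N.hst, if_pos rfl] at hval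
  have := hmax g hflow
  omega

end FlowNet

/-- for a maximum flow `f`, `S_f ∩ T_f = ∅`; consequently `S_f`, `T_f`
and `U_f` are pairwise disjoint and their union is the whole vertex set. -/
theorem stmt2 {V : Type} [Fintype V] (N : FlowNet V) (f : V → V → ℕ)
    (hf : N.IsMaxFlow f) :
    N.Sset f ∩ N.Tset f = ∅ ∧
      N.Sset f ∩ N.Uset f = ∅ ∧ N.Tset f ∩ N.Uset f = ∅ ∧
      N.Sset f ∪ N.Tset f ∪ N.Uset f = Set.univ := by
  refine ⟨?_, ?_, ?_, Set.union_compl_self _⟩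
  · exact Set.eq_empty_iff_forall_notMem.2 fun v ⟨hs, ht⟩ =>
      N.not_reflTransGen_source_sink hf (hs.trans ht)
  · exact Set.disjoint_iff_inter_eq_empty.1 <|
      Set.disjoint_compl_right_iff_subset.2 Set.subset_union_left
  · exact Set.disjoint_iff_inter_eq_empty.1 <|
      Set.disjoint_compl_right_iff_subset.2 Set.subset_union_right
end

section
/- Let (V, s, t, c) be a flow network and let f and f' be two maximum flows in this network. Then S_f = S_{f'}, T_f = T_{f'}, and U_f = U_{f'}; that is, the decomposition of the vertices into the three sets S, T, U is invariant of the choice of maximum flow. -/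
open scoped Classical

/-!
If `f` is a maximum flow then `t ∉ S_f`: a residual `s`–`t` path could be shortened to a simple
one and `f` augmented by one unit along it. So `S_f` and the complement of `T_f` are `s`–`t` cuts
that no residual edge of `f` leaves. Since the value of any flow equals the flow out of a cut
minus the flow into it, a cut has no leaving residual edge exactly when the flow value equals
its capacity. All maximum flows have the same value, so no residual edge of another maximum
flow `f'` leaves these cuts either, whence `S_{f'} ⊆ S_f` and `T_{f'} ⊆ T_f`; symmetry gives
equality.
-/

theorem Relation.ReflTransGen.exists_nodup_isChain {α : Type*} {r : α → α → Prop} {a b : α}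
    (h : Relation.ReflTransGen r a b) :
    ∃ l, (a :: l).IsChain r ∧ (a :: l).getLast (List.cons_ne_nil _ _) = b ∧ (a :: l).Nodup := by
  induction h using Relation.ReflTransGen.head_induction_on with
  | refl => exact ⟨[], .singleton _, rfl, List.nodup_singleton _⟩
  | @head a c hac _ ih =>
    obtain ⟨l, hchain, hlast, hnodup⟩ := ih
    by_cases ha : a ∈ c :: l
    · -- a later occurrence of `a` cuts the loop out of the path
      obtain ⟨p, q, hpq⟩ := List.append_of_mem ha
      have hsuffix : a :: q <:+ c :: l := hpq ▸ List.suffix_append p (a :: q)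
      refine ⟨q, hchain.suffix hsuffix, ?_, hnodup.sublist hsuffix.sublist⟩
      rw [← hlast]
      simp only [hpq]
      rw [List.getLast_append_of_ne_nil]
    · exact ⟨c :: l, .cons_cons hac hchain, by rw [List.getLast_cons]; exact hlast,
        List.nodup_cons.mpr ⟨ha, hnodup⟩⟩

namespace FlowNet

variable {V : Type} [Fintype V] {N : FlowNet V} {f f' g : V → V → ℕ} {X : Set V}

def netOutflow (f : V → V → ℕ) (v : V) : ℤ := ∑ u, (f v u : ℤ) - ∑ u, (f u v : ℤ)

theorem netOutflow_eq_zero_iff {v : V} : netOutflow f v = 0 ↔ ∑ u, f u v = ∑ u, f v u := by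
  rw [netOutflow, sub_eq_zero, eq_comm]
  exact_mod_cast Iff.rfl

theorem value_eq_netOutflow_s (hf : ∀ u v, f u v ≤ N.c u v) :
    (N.value f : ℤ) = netOutflow f N.s := by
  have hin : ∀ u, f u N.s = 0 := fun u => Nat.le_zero.mp (N.c_to_s u ▸ hf u N.s)
  simp [netOutflow, value, hin]

noncomputable def push (N : FlowNet V) (f : V → V → ℕ) (a b : V) : V → V → ℕ := fun u v =>
  if f a b < N.c a b then f u v + if u = a ∧ v = b then 1 else 0
  else f u v - if u = b ∧ v = a then 1 else 0

theorem push_le_c (hf : ∀ u v, f u v ≤ N.c u v) (a b u v : V) : N.push f a b u v ≤ N.c u v := by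
  unfold push
  split_ifs <;> grind

theorem push_eq_of_ne {a b w : V} (ha : w ≠ a) (hb : w ≠ b) (v : V) :
    N.push f a b w v = f w v ∧ N.push f a b v w = f v w := by
  unfold push
  split_ifs <;> grind

theorem netOutflow_push {a b : V} (hab : N.ResEdge f a b) (v : V) :
    netOutflow (N.push f a b) v
      = netOutflow f v + (if v = a then 1 else 0) - (if v = b then 1 else 0) := by
  unfold netOutflow push
  by_cases hfwd : f a b < N.c a b
  · simp only [hfwd, ↓reduceIte, ite_and, Nat.cast_add, Nat.cast_ite, Nat.cast_one,
      CharP.cast_eq_zero, Finset.sum_add_distrib, Finset.sum_ite_irrel, Finset.sum_ite_eq',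
      Finset.mem_univ, Finset.sum_const_zero]
    ring
  · have hpos : 0 < f b a := hab.resolve_left hfwd
    have hcast : ∀ u w, (((f u w - if u = b ∧ w = a then 1 else 0 : ℕ)) : ℤ)
        = f u w - if u = b ∧ w = a then 1 else 0 := by
      intro u w
      split_ifs with h
      · obtain ⟨rfl, rfl⟩ := h
        omega
      · simp
    simp only [hfwd, if_false, hcast]
    simp only [ite_and, Finset.sum_sub_distrib, Finset.sum_ite_irrel, Finset.sum_ite_eq',
      Finset.mem_univ, ↓reduceIte, Finset.sum_const_zero]
    ring

/-- Pushes along the path from its end backwards; simplicity keeps each edge residual until its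
turn comes. -/
theorem exists_augmentation_of_isChain (hf : ∀ u v, f u v ≤ N.c u v) (a : V) (l : List V)
    (hchain : (a :: l).IsChain (N.ResEdge f)) (hnodup : (a :: l).Nodup) :
    ∃ g : V → V → ℕ, (∀ u v, g u v ≤ N.c u v) ∧
      (∀ w ∉ a :: l, ∀ v, g w v = f w v ∧ g v w = f v w) ∧
      ∀ v, netOutflow g v = netOutflow f v + (if v = a then 1 else 0)
        - (if v = (a :: l).getLast (List.cons_ne_nil _ _) then 1 else 0) := by
  induction l generalizing a with
  | nil => exact ⟨f, hf, fun _ _ _ => ⟨rfl, rfl⟩, fun v => (add_sub_cancel_right _ _).symm⟩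
  | cons b l ih =>
    obtain ⟨hab, hchain⟩ := List.isChain_cons_cons.mp hchain
    obtain ⟨ha, hnodup⟩ := List.nodup_cons.mp hnodup
    obtain ⟨g, hg, hgf, hnet⟩ := ih b hchain hnodup
    have hres : N.ResEdge g a b := by
      obtain ⟨h1, h2⟩ := hgf a ha b
      rwa [ResEdge, h1, h2]
    refine ⟨N.push g a b, push_le_c hg a b, fun w hw v => ?_, fun v => ?_⟩
    · have hwl : w ∉ b :: l := fun h => hw (List.mem_cons_of_mem a h)
      obtain ⟨hwa, hwb, -⟩ : w ≠ a ∧ w ≠ b ∧ w ∉ l := by simpa [not_or] using hw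
      rw [(push_eq_of_ne hwa hwb v).1, (push_eq_of_ne hwa hwb v).2]
      exact hgf w hwl v
    · rw [netOutflow_push hres, hnet, List.getLast_cons_cons]
      ring

theorem IsMaxFlow.not_reflTransGen_s_t (hf : N.IsMaxFlow f) :
    ¬ Relation.ReflTransGen (N.ResEdge f) N.s N.t := by
  intro hpath
  obtain ⟨l, hchain, hlast, hnodup⟩ := hpath.exists_nodup_isChain
  obtain ⟨g, hgc, -, hnet⟩ := exists_augmentation_of_isChain hf.1.1 N.s l hchain hnodup
  rw [hlast] at hnet
  have hg : N.IsFlow g := ⟨hgc, fun v hs ht => by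
    rw [← netOutflow_eq_zero_iff, hnet, if_neg hs, if_neg ht,
      netOutflow_eq_zero_iff.mpr (hf.1.2 v hs ht)]
    simp⟩
  have hvalue : (N.value g : ℤ) = N.value f + 1 := by
    rw [value_eq_netOutflow_s hgc, value_eq_netOutflow_s hf.1.1, hnet, if_pos rfl, if_neg N.hst]
    ring
  have := hf.2 g hg
  omega

noncomputable def outflow (f : V → V → ℕ) (X : Set V) : ℕ :=
  ∑ u, ∑ v, if u ∈ X ∧ v ∉ X then f u v else 0

theorem sum_netOutflow_eq_outflow_sub (f : V → V → ℕ) (X : Set V) :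
    ∑ v, (if v ∈ X then netOutflow f v else 0) = outflow f X - outflow f Xᶜ := by
  have hcomm : ∑ v, ∑ u, (if v ∈ X then (f u v : ℤ) else 0)
      = ∑ v, ∑ u, if u ∈ X then (f v u : ℤ) else 0 := Finset.sum_comm
  calc ∑ v, (if v ∈ X then netOutflow f v else 0)
      = ∑ v, ∑ u, (if v ∈ X then (f v u : ℤ) else 0)
          - ∑ v, ∑ u, (if v ∈ X then (f u v : ℤ) else 0) := by
        rw [← Finset.sum_sub_distrib]
        refine Finset.sum_congr rfl fun v _ => ?_
        split_ifs <;> simp [netOutflow]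
    _ = ∑ v, ∑ u, ((if v ∈ X then (f v u : ℤ) else 0) - if u ∈ X then (f v u : ℤ) else 0) := by
        simp only [hcomm, Finset.sum_sub_distrib]
    _ = outflow f X - outflow f Xᶜ := by
        simp only [outflow]
        push_cast
        simp only [← Finset.sum_sub_distrib]
        refine Finset.sum_congr rfl fun v _ => Finset.sum_congr rfl fun u _ => ?_
        by_cases hv : v ∈ X <;> by_cases hu : u ∈ X <;> simp [hu, hv]

theorem value_eq_outflow_sub (hf : N.IsFlow f) (hX : N.IsCut X) :
    (N.value f : ℤ) = outflow f X - outflow f Xᶜ := by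
  rw [← sum_netOutflow_eq_outflow_sub, Finset.sum_eq_single N.s, if_pos hX.1,
    value_eq_netOutflow_s hf.1]
  · intro v _ hvs
    split_ifs with hv
    · exact netOutflow_eq_zero_iff.mpr (hf.2 v hvs fun hvt => hX.2 (hvt ▸ hv))
    · rfl
  · simp

theorem outflow_mono (hle : ∀ u v, f u v ≤ g u v) (X : Set V) : outflow f X ≤ outflow g X :=
  Finset.sum_le_sum fun u _ => Finset.sum_le_sum fun v _ => by split_ifs <;> simp [hle]

theorem outflow_eq_iff_of_le (hle : ∀ u v, f u v ≤ g u v) (X : Set V) :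
    outflow f X = outflow g X ↔ ∀ u ∈ X, ∀ v ∉ X, f u v = g u v := by
  have hle' : ∀ u v, (if u ∈ X ∧ v ∉ X then f u v else 0) ≤ if u ∈ X ∧ v ∉ X then g u v else 0 :=
    fun u v => by split_ifs <;> simp [hle]
  rw [outflow, outflow, Finset.sum_eq_sum_iff_of_le fun u _ => Finset.sum_le_sum fun v _ => hle' u v]
  simp only [Finset.mem_univ, true_implies, Finset.sum_eq_sum_iff_of_le fun v _ => hle' _ v]
  refine ⟨fun H u hu v hv => by simpa [hu, hv] using H u v, fun H u v => ?_⟩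
  split_ifs with huv
  exacts [H u huv.1 v huv.2, rfl]

def ResClosed (N : FlowNet V) (f : V → V → ℕ) (X : Set V) : Prop :=
  ∀ u ∈ X, ∀ v, N.ResEdge f u v → v ∈ X

theorem value_eq_cap_iff (hf : N.IsFlow f) (hX : N.IsCut X) :
    N.value f = N.cap X ↔ N.ResClosed f X := by
  have hvalue := value_eq_outflow_sub hf hX
  have hle := outflow_mono hf.1 X
  have hzero : outflow 0 Xᶜ = 0 := by simp [outflow]
  calc N.value f = N.cap X ↔ outflow f X = outflow N.c X ∧ outflow 0 Xᶜ = outflow f Xᶜ := by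
        rw [show N.cap X = outflow N.c X from rfl, hzero]
        omega
    _ ↔ (∀ u ∈ X, ∀ v ∉ X, f u v = N.c u v) ∧ ∀ u ∉ X, ∀ v ∈ X, 0 = f u v := by
        rw [outflow_eq_iff_of_le hf.1, outflow_eq_iff_of_le (f := 0) fun _ _ => Nat.zero_le _]
        simp only [Set.mem_compl_iff, not_not, Pi.zero_apply]
    _ ↔ N.ResClosed f X := by
        refine ⟨fun ⟨hsat, hzero⟩ u hu v hres => ?_,
          fun H => ⟨fun u hu v hv => ?_, fun u hu v hv => ?_⟩⟩
        · by_contra hv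
          have := hsat u hu v hv
          have := hzero v hv u hu
          rcases hres with h | h <;> omega
        · by_contra hne
          exact hv (H u hu v (Or.inl (lt_of_le_of_ne (hf.1 u v) hne)))
        · by_contra hne
          exact hu (H v hv u (Or.inr (Nat.pos_of_ne_zero (Ne.symm hne))))

theorem ResClosed.mem_of_reflTransGen (hX : N.ResClosed f X) {u v : V} (hu : u ∈ X)
    (huv : Relation.ReflTransGen (N.ResEdge f) u v) : v ∈ X := by
  induction huv with
  | refl => exact hu
  | tail _ hres ih => exact hX _ ih _ hres

theorem resClosed_Sset : N.ResClosed f (N.Sset f) :=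
  fun _ hu _ hres => Relation.ReflTransGen.tail hu hres

theorem resClosed_compl_Tset : N.ResClosed f (N.Tset f)ᶜ :=
  fun _ hu _ hres hv => hu (Relation.ReflTransGen.head hres hv)

theorem IsMaxFlow.isCut_Sset (hf : N.IsMaxFlow f) : N.IsCut (N.Sset f) :=
  ⟨Relation.ReflTransGen.refl, hf.not_reflTransGen_s_t⟩

theorem IsMaxFlow.isCut_compl_Tset (hf : N.IsMaxFlow f) : N.IsCut (N.Tset f)ᶜ :=
  ⟨hf.not_reflTransGen_s_t, fun h => h Relation.ReflTransGen.refl⟩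

theorem IsMaxFlow.resClosed (hf : N.IsMaxFlow f) (hf' : N.IsMaxFlow f') (hX : N.IsCut X)
    (hclosed : N.ResClosed f X) : N.ResClosed f' X := by
  have hvalue : N.value f' = N.value f := le_antisymm (hf.2 f' hf'.1) (hf'.2 f hf.1)
  rwa [← value_eq_cap_iff hf'.1 hX, hvalue, value_eq_cap_iff hf.1 hX]

theorem IsMaxFlow.Sset_subset (hf : N.IsMaxFlow f) (hf' : N.IsMaxFlow f') :
    N.Sset f' ⊆ N.Sset f := fun _ hv =>
  (hf.resClosed hf' hf.isCut_Sset resClosed_Sset).mem_of_reflTransGen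
    Relation.ReflTransGen.refl hv

theorem IsMaxFlow.Tset_subset (hf : N.IsMaxFlow f) (hf' : N.IsMaxFlow f') :
    N.Tset f' ⊆ N.Tset f := by
  intro v hv
  by_contra hvT
  exact (hf.resClosed hf' hf.isCut_compl_Tset resClosed_compl_Tset).mem_of_reflTransGen
    hvT hv Relation.ReflTransGen.refl

end FlowNet

/-- the decomposition `S, T, U` is invariant of the choice of maximum flow. -/
theorem stmt3 {V : Type} [Fintype V] (N : FlowNet V) (f f' : V → V → ℕ)
    (hf : N.IsMaxFlow f) (hf' : N.IsMaxFlow f') :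
    N.Sset f = N.Sset f' ∧ N.Tset f = N.Tset f' ∧ N.Uset f = N.Uset f' := by
  have hS : N.Sset f = N.Sset f' := (hf'.Sset_subset hf).antisymm (hf.Sset_subset hf')
  have hT : N.Tset f = N.Tset f' := (hf'.Tset_subset hf).antisymm (hf.Tset_subset hf')
  exact ⟨hS, hT, by rw [FlowNet.Uset, FlowNet.Uset, hS, hT]⟩
end

section
/- Let (V, s, t, c) be a flow network and let x, y ∈ V \ {s, t} be vertices such that: c x y = 1; c x w = 0 for every w ≠ y (the only positive-capacity edge out of x goes to y); c w y = 0 for every w ≠ x (the only positive-capacity edge into y comes from x); there is exactly one vertex u with c u x > 0 and moreover c u x = 1 (x has a unique incoming edge, of capacity 1); and there is exactly one vertex z with c y z > 0 and moreover c y z = 1 (y has a unique outgoing edge, of capacity 1). Then for every flow f: x ∈ S_f if and only if y ∈ S_f; x ∈ T_f if and only if y ∈ T_f; and x ∈ U_f if and only if y ∈ U_f. -/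
open scoped Classical

/-- if `x, y` are internal vertices with `c x y = 1`, the only
positive-capacity edge out of `x` going to `y`, the only positive-capacity edge into `y`
coming from `x`, `x` having a unique incoming edge of capacity 1 and `y` having a unique
outgoing edge of capacity 1, then for every flow `f`, `x` and `y` lie in the same part of
the decomposition `S_f, T_f, U_f`. -/
theorem stmt4 {V : Type} [Fintype V] (N : FlowNet V) (x y : V)
    (hxs : x ≠ N.s) (hxt : x ≠ N.t) (hys : y ≠ N.s) (hyt : y ≠ N.t)
    (hxy : N.c x y = 1)
    (hxout : ∀ w, w ≠ y → N.c x w = 0)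
    (hyin : ∀ w, w ≠ x → N.c w y = 0)
    (hin : ∃ u, N.c u x = 1 ∧ ∀ w, w ≠ u → N.c w x = 0)
    (hout : ∃ z, N.c y z = 1 ∧ ∀ w, w ≠ z → N.c y w = 0) :
    ∀ f, N.IsFlow f →
      (x ∈ N.Sset f ↔ y ∈ N.Sset f) ∧ (x ∈ N.Tset f ↔ y ∈ N.Tset f) ∧
        (x ∈ N.Uset f ↔ y ∈ N.Uset f) := by
  obtain ⟨u, huc, hu0⟩ := hin
  obtain ⟨z, hzc, hz0⟩ := hout
  intro f hf
  obtain ⟨hcap, hcons⟩ := hf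
  have hfxw : ∀ w, w ≠ y → f x w = 0 := fun w hw =>
    Nat.le_zero.mp ((hxout w hw) ▸ hcap x w)
  have hfwy : ∀ w, w ≠ x → f w y = 0 := fun w hw =>
    Nat.le_zero.mp ((hyin w hw) ▸ hcap w y)
  have hfwx : ∀ w, w ≠ u → f w x = 0 := fun w hw =>
    Nat.le_zero.mp ((hu0 w hw) ▸ hcap w x)
  have hfyw : ∀ w, w ≠ z → f y w = 0 := fun w hw =>
    Nat.le_zero.mp ((hz0 w hw) ▸ hcap y w)
  have hsum1 : (∑ w, f w x) = f u x :=
    Finset.sum_eq_single u (fun b _ hb => hfwx b hb) (by simp)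
  have hsum2 : (∑ w, f x w) = f x y :=
    Finset.sum_eq_single y (fun b _ hb => hfxw b hb) (by simp)
  have hsum3 : (∑ w, f w y) = f x y :=
    Finset.sum_eq_single x (fun b _ hb => hfwy b hb) (by simp)
  have hsum4 : (∑ w, f y w) = f y z :=
    Finset.sum_eq_single z (fun b _ hb => hfyw b hb) (by simp)
  have hux : f u x = f x y := by rw [← hsum1, ← hsum2]; exact hcons x hxs hxt
  have hyz : f x y = f y z := by rw [← hsum3, ← hsum4]; exact hcons y hys hyt
  have hle : f x y ≤ 1 := hxy ▸ hcap x y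
  rcases Nat.eq_zero_or_pos (f x y) with h0 | hpos
  · -- f x y = 0
    have exy : N.ResEdge f x y := Or.inl (by rw [hxy, h0]; omega)
    have hinx : ∀ w, N.ResEdge f w x → w = u := by
      intro w hw
      rcases hw with h | h
      · by_contra hne; rw [hu0 w hne] at h; omega
      · by_cases hwy : w = y
        · subst hwy; rw [h0] at h; omega
        · rw [hfxw w hwy] at h; omega
    have hiny : ∀ w, N.ResEdge f w y → w = x := by
      intro w hw
      rcases hw with h | h
      · by_contra hne; rw [hyin w hne] at h; omega
      · by_cases hwz : w = z
        · subst hwz; rw [← hyz, h0] at h; omega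
        · rw [hfyw w hwz] at h; omega
    have houtx : ∀ w, N.ResEdge f x w → w = y := by
      intro w hw
      rcases hw with h | h
      · by_contra hne; rw [hxout w hne] at h; omega
      · by_cases hwu : w = u
        · subst hwu; rw [hux, h0] at h; omega
        · rw [hfwx w hwu] at h; omega
    have hS : x ∈ N.Sset f ↔ y ∈ N.Sset f := by
      constructor
      · intro h; exact h.tail exy
      · intro h
        rcases Relation.ReflTransGen.cases_tail h with h1 | ⟨w, hw1, hw2⟩
        · exact absurd h1 hys
        · exact (hiny w hw2) ▸ hw1
    have hT : x ∈ N.Tset f ↔ y ∈ N.Tset f := by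
      constructor
      · intro h
        rcases Relation.ReflTransGen.cases_head h with h1 | ⟨w, hw1, hw2⟩
        · exact absurd h1 hxt
        · exact (houtx w hw1) ▸ hw2
      · intro h; exact Relation.ReflTransGen.head exy h
    refine ⟨hS, hT, ?_⟩
    simp only [FlowNet.Uset, Set.mem_compl_iff, Set.mem_union]
    rw [hS, hT]
  · -- f x y = 1
    have h1 : f x y = 1 := le_antisymm hle hpos
    have eyx : N.ResEdge f y x := Or.inr (by omega)
    have hinx : ∀ w, N.ResEdge f w x → w = y := by
      intro w hw
      rcases hw with h | h
      · by_cases hwu : w = u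
        · subst hwu; rw [huc, hux, h1] at h; omega
        · rw [hu0 w hwu] at h; omega
      · by_contra hne; rw [hfxw w hne] at h; omega
    have houty : ∀ w, N.ResEdge f y w → w = x := by
      intro w hw
      rcases hw with h | h
      · by_cases hwz : w = z
        · subst hwz; rw [hzc, ← hyz, h1] at h; omega
        · rw [hz0 w hwz] at h; omega
      · by_contra hne; rw [hfwy w hne] at h; omega
    have hS : x ∈ N.Sset f ↔ y ∈ N.Sset f := by
      constructor
      · intro h
        rcases Relation.ReflTransGen.cases_tail h with h1 | ⟨w, hw1, hw2⟩
        · exact absurd h1 hxs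
        · exact (hinx w hw2) ▸ hw1
      · intro h; exact h.tail eyx
    have hT : x ∈ N.Tset f ↔ y ∈ N.Tset f := by
      constructor
      · intro h; exact Relation.ReflTransGen.head eyx h
      · intro h
        rcases Relation.ReflTransGen.cases_head h with h1 | ⟨w, hw1, hw2⟩
        · exact absurd h1 hyt
        · exact (houty w hw1) ▸ hw2
    refine ⟨hS, hT, ?_⟩
    simp only [FlowNet.Uset, Set.mem_compl_iff, Set.mem_union]
    rw [hS, hT]
end

section
/- Let (V, s, t, c) be a flow network and let f be a maximum flow. Suppose there is a directed path s = u_0, u_1, …, u_k = w in the network (i.e., c u_i u_{i+1} > 0 for every 0 ≤ i < k) with w ∈ T_f ∪ U_f. Then there exists an index i with u_i ∈ S_f and u_{i+1} ∈ T_f ∪ U_f, and every maximum flow g in the network satisfies g u_i u_{i+1} = c u_i u_{i+1} (this edge of the path is saturated by every maximum flow). -/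
open scoped Classical

theorem exists_fn_path {α : Type*} {r : α → α → Prop} {a b : α} (h : Relation.ReflTransGen r a b) :
    ∃ n, ∃ q : ℕ → α, q 0 = a ∧ q n = b ∧ ∀ i < n, r (q i) (q (i + 1)) := by
  induction h using Relation.ReflTransGen.head_induction_on with
  | refl => exact ⟨0, fun _ => b, rfl, rfl, by omega⟩
  | @head x c hac hcb ih =>
    obtain ⟨n, q, h0, hn, he⟩ := ih
    refine ⟨n + 1, fun i => if i = 0 then x else q (i - 1), by simp, by simp [hn], ?_⟩
    intro i hi
    by_cases h1 : i = 0
    · subst h1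
      simpa [h0] using hac
    · simp only [if_neg h1, if_neg (by omega : ¬ i + 1 = 0)]
      have : i + 1 - 1 = (i - 1) + 1 := by omega
      rw [this]
      exact he (i - 1) (by omega)

theorem exists_inj_fn_path {α : Type*} {r : α → α → Prop} {a b : α} (h : Relation.ReflTransGen r a b) :
    ∃ n, ∃ q : ℕ → α, q 0 = a ∧ q n = b ∧ (∀ i < n, r (q i) (q (i + 1))) ∧
      ∀ i ≤ n, ∀ j ≤ n, q i = q j → i = j := by
  classical
  have hex : ∃ n, ∃ q : ℕ → α, q 0 = a ∧ q n = b ∧ ∀ i < n, r (q i) (q (i + 1)) :=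
    exists_fn_path h
  obtain ⟨q, h0, hn, he⟩ := Nat.find_spec hex
  set n := Nat.find hex with hndef
  refine ⟨n, q, h0, hn, he, ?_⟩
  have key : ∀ i j, i < j → j ≤ n → q i = q j → False := by
    intro i j hij hj hq
    have hlt : n - (j - i) < n := by omega
    apply Nat.find_min hex hlt
    refine ⟨fun m => if m ≤ i then q m else q (m + (j - i)), by simp [h0], ?_, ?_⟩
    · by_cases hc : n - (j - i) ≤ i
      · have hii : n - (j - i) = i := by omega
        simp only [hii, le_refl, ite_true]
        rw [hq, show j = n by omega, hn]
      · simp only [if_neg hc]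
        rw [show n - (j - i) + (j - i) = n by omega, hn]
    · intro m hm
      by_cases h1 : m + 1 ≤ i
      · simp only [if_pos (by omega : m ≤ i), if_pos h1]
        exact he m (by omega)
      · by_cases h2 : m ≤ i
        · have hmi : m = i := by omega
          simp only [if_pos h2, if_neg h1]
          rw [hmi, hq, show i + 1 + (j - i) = j + 1 by omega]
          exact he j (by omega)
        · simp only [if_neg h2, if_neg (by omega : ¬ m + 1 ≤ i)]
          rw [show m + 1 + (j - i) = (m + (j - i)) + 1 by omega]
          exact he (m + (j - i)) (by omega)
  intro i hi j hj hq
  rcases lt_trichotomy i j with h | h | h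
  · exact absurd hq (by intro hq'; exact key i j h hj hq')
  · exact h
  · exact absurd hq.symm (by intro hq'; exact key j i h hi hq')

namespace FlowNet

variable {V : Type} [Fintype V]

theorem exists_better (N : FlowNet V) (f : V → V → ℕ) (hf : N.IsFlow f)
    (h : Relation.ReflTransGen (N.ResEdge f) N.s N.t) :
    ∃ f', N.IsFlow f' ∧ N.value f < N.value f' := by
  classical
  obtain ⟨n, q, h0, hn, he, hinj⟩ := exists_inj_fn_path h
  have hn0 : 0 < n := by
    rcases Nat.eq_zero_or_pos n with h' | h'
    · exact absurd (h0.symm.trans (h' ▸ hn)) N.hst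
    · exact h'
  set Fwd : V → V → Prop := fun u v => ∃ i, i < n ∧ q i = u ∧ q (i + 1) = v ∧ f u v < N.c u v
    with hFwdDef
  set Bwd : V → V → Prop := fun u v => ∃ i, i < n ∧ q i = v ∧ q (i + 1) = u ∧ ¬ f v u < N.c v u
    with hBwdDef
  set E : V → V → Prop := fun u v => ∃ i, i < n ∧ q i = u ∧ q (i + 1) = v with hEDef
  -- backward edges carry positive flow
  have hB1 : ∀ u v, Bwd u v → 0 < f u v := by
    rintro u v ⟨i, hi, hiv, hiu, hlt⟩
    have := he i hi
    rw [hiv, hiu] at this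
    rcases this with h' | h'
    · exact absurd h' hlt
    · exact h'
  -- an edge cannot be both forward and backward
  have hnb : ∀ u v, Fwd u v → Bwd u v → False := by
    rintro u v ⟨i, hi, hiu, hiv, -⟩ ⟨j, hj, hjv, hju, -⟩
    have e1 : i = j + 1 := hinj i (by omega) (j + 1) (by omega) (hiu.trans hju.symm)
    have e2 : i + 1 = j := hinj (i + 1) (by omega) j (by omega) (hiv.trans hjv.symm)
    omega
  set f' : V → V → ℕ :=
    fun u v => if Fwd u v then f u v + 1 else if Bwd u v then f u v - 1 else f u v with hf'Def
  have hcast : ∀ u v, (f' u v : ℤ) =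
      (f u v : ℤ) + ((if Fwd u v then (1 : ℤ) else 0) - (if Bwd u v then (1 : ℤ) else 0)) := by
    intro u v
    by_cases h1 : Fwd u v
    · have h2 : ¬ Bwd u v := fun hb => hnb u v h1 hb
      simp [hf'Def, h1, h2]
    · by_cases h2 : Bwd u v
      · have := hB1 u v h2
        simp only [hf'Def, if_neg h1, if_pos h2]
        omega
      · simp [hf'Def, h1, h2]
  -- merging forward/backward indicators into edge indicators
  have hm : ∀ u v, (if Fwd u v then (1 : ℤ) else 0) + (if Bwd v u then (1 : ℤ) else 0) =
      if E u v then 1 else 0 := by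
    intro u v
    by_cases hE : E u v
    · obtain ⟨i, hi, hu, hv⟩ := hE
      by_cases hlt : f u v < N.c u v
      · rw [if_pos ⟨i, hi, hu, hv, hlt⟩, if_neg, if_pos ⟨i, hi, hu, hv⟩]
        · ring
        · rintro ⟨j, hj, hju, hjv, hc⟩
          exact hc hlt
      · rw [if_neg, if_pos ⟨i, hi, hu, hv, hlt⟩, if_pos ⟨i, hi, hu, hv⟩]
        · ring
        · rintro ⟨j, hj, hju, hjv, hc⟩
          exact hlt hc
    · rw [if_neg, if_neg, if_neg hE]
      · ring
      · rintro ⟨j, hj, hju, hjv, -⟩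
        exact hE ⟨j, hj, hju, hjv⟩
      · rintro ⟨j, hj, hju, hjv, -⟩
        exact hE ⟨j, hj, hju, hjv⟩
  -- sum of incoming edge indicators
  have hInSum : ∀ v : V, (∑ u : V, if E u v then (1 : ℤ) else 0) =
      if (∃ i, i < n ∧ q (i + 1) = v) then 1 else 0 := by
    intro v
    by_cases hIn : ∃ i, i < n ∧ q (i + 1) = v
    · obtain ⟨i, hi, hiv⟩ := hIn
      rw [if_pos ⟨i, hi, hiv⟩]
      rw [Finset.sum_eq_single_of_mem (q i) (Finset.mem_univ _)]
      · rw [if_pos ⟨i, hi, rfl, hiv⟩]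
      · intro u _ hne
        rw [if_neg]
        rintro ⟨i', hi', hu, hv⟩
        have : i' + 1 = i + 1 := hinj (i' + 1) (by omega) (i + 1) (by omega) (hv.trans hiv.symm)
        apply hne
        rw [← hu, show i' = i by omega]
    · rw [if_neg hIn]
      apply Finset.sum_eq_zero
      intro u _
      rw [if_neg]
      rintro ⟨i, hi, -, hv⟩
      exact hIn ⟨i, hi, hv⟩
  -- sum of outgoing edge indicators
  have hOutSum : ∀ v : V, (∑ u : V, if E v u then (1 : ℤ) else 0) =
      if (∃ i, i < n ∧ q i = v) then 1 else 0 := by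
    intro v
    by_cases hOut : ∃ i, i < n ∧ q i = v
    · obtain ⟨i, hi, hiv⟩ := hOut
      rw [if_pos ⟨i, hi, hiv⟩]
      rw [Finset.sum_eq_single_of_mem (q (i + 1)) (Finset.mem_univ _)]
      · rw [if_pos ⟨i, hi, hiv, rfl⟩]
      · intro u _ hne
        rw [if_neg]
        rintro ⟨i', hi', hv, hu⟩
        have : i' = i := hinj i' (by omega) i (by omega) (hv.trans hiv.symm)
        apply hne
        rw [← hu, this]
    · rw [if_neg hOut]
      apply Finset.sum_eq_zero
      intro u _
      rw [if_neg]
      rintro ⟨i, hi, hv, -⟩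
      exact hOut ⟨i, hi, hv⟩
  have hflow' : N.IsFlow f' := by
    constructor
    · intro u v
      by_cases h1 : Fwd u v
      · obtain ⟨i, hi, hu, hv, hlt⟩ := h1
        have hF : Fwd u v := ⟨i, hi, hu, hv, hlt⟩
        simp only [hf'Def, if_pos hF]
        omega
      · by_cases h2 : Bwd u v
        · have := hf.1 u v
          simp only [hf'Def, if_neg h1, if_pos h2]
          omega
        · simp only [hf'Def, if_neg h1, if_neg h2]
          exact hf.1 u v
    · intro v hvs hvt
      have hio : (if (∃ i, i < n ∧ q (i + 1) = v) then (1 : ℤ) else 0) =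
          if (∃ i, i < n ∧ q i = v) then 1 else 0 := by
        by_cases hIn : ∃ i, i < n ∧ q (i + 1) = v
        · obtain ⟨i, hi, hiv⟩ := hIn
          have hlt : i + 1 < n := by
            rcases Nat.lt_or_ge (i + 1) n with h' | h'
            · exact h'
            · exfalso
              have : i + 1 = n := by omega
              exact hvt (hiv.symm.trans (this ▸ hn))
          rw [if_pos ⟨i, hi, hiv⟩, if_pos ⟨i + 1, hlt, hiv⟩]
        · rw [if_neg hIn, if_neg]
          rintro ⟨i, hi, hiv⟩
          have hi0 : i ≠ 0 := by
            rintro rfl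
            exact hvs (hiv.symm.trans h0)
          exact hIn ⟨i - 1, by omega, by rw [show i - 1 + 1 = i by omega]; exact hiv⟩
      have hδ : (∑ u : V, ((if Fwd u v then (1 : ℤ) else 0) - (if Bwd u v then (1 : ℤ) else 0)))
          = ∑ u : V, ((if Fwd v u then (1 : ℤ) else 0) - (if Bwd v u then (1 : ℤ) else 0)) := by
        have hpt : ∀ u : V,
            ((if Fwd u v then (1 : ℤ) else 0) - (if Bwd u v then (1 : ℤ) else 0)) -
            ((if Fwd v u then (1 : ℤ) else 0) - (if Bwd v u then (1 : ℤ) else 0)) =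
            (if E u v then (1 : ℤ) else 0) - (if E v u then (1 : ℤ) else 0) := by
          intro u
          have h1 := hm u v
          have h2 := hm v u
          linarith
        have hsub : (∑ u : V, ((if Fwd u v then (1 : ℤ) else 0) - (if Bwd u v then (1 : ℤ) else 0)))
            - (∑ u : V, ((if Fwd v u then (1 : ℤ) else 0) - (if Bwd v u then (1 : ℤ) else 0)))
            = (∑ u : V, if E u v then (1 : ℤ) else 0) - ∑ u : V, if E v u then (1 : ℤ) else 0 := by
          rw [← Finset.sum_sub_distrib, ← Finset.sum_sub_distrib]
          exact Finset.sum_congr rfl fun u _ => hpt u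
        rw [hInSum, hOutSum, hio, sub_self] at hsub
        linarith
      have hz : (∑ u : V, (f' u v : ℤ)) = ∑ u : V, (f' v u : ℤ) := by
        simp only [hcast]
        rw [Finset.sum_add_distrib, Finset.sum_add_distrib]
        have hcons : (∑ u : V, (f u v : ℤ)) = ∑ u : V, (f v u : ℤ) := by
          exact_mod_cast congrArg (fun x : ℕ => (x : ℤ)) (hf.2 v hvs hvt)
        rw [hcons, hδ]
      have : ((∑ u : V, f' u v : ℕ) : ℤ) = ((∑ u : V, f' v u : ℕ) : ℤ) := by
        push_cast
        exact hz
      exact_mod_cast this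
  refine ⟨f', hflow', ?_⟩
  have hBs : ∀ v, ¬ Bwd N.s v := by
    rintro v ⟨i, hi, hiv, his, -⟩
    have : i + 1 = 0 := hinj (i + 1) (by omega) 0 (by omega) (his.trans h0.symm)
    omega
  have hFs : ∀ v, Fwd N.s v ↔ v = q 1 := by
    intro v
    constructor
    · rintro ⟨i, hi, his, hiv, -⟩
      have : i = 0 := hinj i (by omega) 0 (by omega) (his.trans h0.symm)
      rw [← hiv, this]
    · rintro rfl
      have hr := he 0 hn0
      rw [h0] at hr
      rcases hr with h' | h'
      · exact ⟨0, hn0, h0, rfl, h'⟩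
      · exfalso
        have := hf.1 (q (0 + 1)) N.s
        rw [N.c_to_s] at this
        omega
  have hval : ((N.value f' : ℕ) : ℤ) = (N.value f : ℤ) + 1 := by
    unfold FlowNet.value
    push_cast
    simp only [hcast]
    rw [Finset.sum_add_distrib]
    have h1 : (∑ v : V, ((if Fwd N.s v then (1 : ℤ) else 0) - (if Bwd N.s v then (1 : ℤ) else 0)))
        = 1 := by
      have : ∀ v : V, ((if Fwd N.s v then (1 : ℤ) else 0) - (if Bwd N.s v then (1 : ℤ) else 0))
          = if v = q 1 then 1 else 0 := by
        intro v
        rw [if_neg (hBs v), sub_zero]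
        by_cases h' : Fwd N.s v
        · rw [if_pos h', if_pos ((hFs v).1 h')]
        · rw [if_neg h', if_neg fun hh => h' ((hFs v).2 hh)]
      rw [Finset.sum_congr rfl fun v _ => this v]
      simp
    rw [h1]
  have : N.value f < N.value f' := by omega
  exact this

theorem no_aug (N : FlowNet V) (f : V → V → ℕ) (hf : N.IsMaxFlow f) :
    ¬ Relation.ReflTransGen (N.ResEdge f) N.s N.t := by
  intro h
  obtain ⟨f', hf', hv⟩ := N.exists_better f hf.1 h
  have := hf.2 f' hf'
  omega

end FlowNet

namespace FlowNet

variable {V : Type} [Fintype V]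

theorem value_eq_cross (N : FlowNet V) (g : V → V → ℕ) (hg : N.IsFlow g) (X : Set V)
    (hs : N.s ∈ X) (ht : N.t ∉ X) :
    (N.value g : ℤ) = ∑ v ∈ Finset.univ.filter (· ∈ X),
      ∑ u ∈ Finset.univ.filter (· ∉ X), ((g v u : ℤ) - (g u v : ℤ)) := by
  classical
  have key : ∀ v ∈ Finset.univ.filter (· ∈ X),
      (∑ u : V, ((g v u : ℤ) - (g u v : ℤ))) = if v = N.s then (N.value g : ℤ) else 0 := by
    intro v hv
    rw [Finset.mem_filter] at hv
    by_cases hvs : v = N.s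
    · subst hvs
      rw [if_pos rfl]
      have hz : ∀ u : V, g u N.s = 0 := by
        intro u
        have h1 := hg.1 u N.s
        rw [N.c_to_s] at h1
        omega
      unfold FlowNet.value
      rw [Finset.sum_sub_distrib]
      push_cast
      simp [hz]
    · rw [if_neg hvs]
      have hvt : v ≠ N.t := fun h => ht (h ▸ hv.2)
      have hc := hg.2 v hvs hvt
      rw [Finset.sum_sub_distrib]
      have : (∑ u : V, (g v u : ℤ)) = ∑ u : V, (g u v : ℤ) := by
        exact_mod_cast congrArg (fun x : ℕ => (x : ℤ)) hc.symm
      omega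
  have h1 : (∑ v ∈ Finset.univ.filter (· ∈ X), ∑ u : V, ((g v u : ℤ) - (g u v : ℤ)))
      = N.value g := by
    rw [Finset.sum_congr rfl key]
    rw [Finset.sum_eq_single_of_mem N.s (by simp [hs])]
    · rw [if_pos rfl]
    · intro v _ hne
      rw [if_neg hne]
  have h2 : ∀ v : V, (∑ u : V, ((g v u : ℤ) - (g u v : ℤ)))
      = (∑ u ∈ Finset.univ.filter (· ∈ X), ((g v u : ℤ) - (g u v : ℤ)))
      + ∑ u ∈ Finset.univ.filter (· ∉ X), ((g v u : ℤ) - (g u v : ℤ)) := by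
    intro v
    exact (Finset.sum_filter_add_sum_filter_not Finset.univ (· ∈ X) _).symm
  have h3 : (∑ v ∈ Finset.univ.filter (· ∈ X),
      ∑ u ∈ Finset.univ.filter (· ∈ X), ((g v u : ℤ) - (g u v : ℤ))) = 0 := by
    have hcomm := Finset.sum_comm (s := Finset.univ.filter (· ∈ X))
      (t := Finset.univ.filter (· ∈ X)) (f := fun v u => ((g v u : ℤ) - (g u v : ℤ)))
    have hneg : (∑ v ∈ Finset.univ.filter (· ∈ X),
        ∑ u ∈ Finset.univ.filter (· ∈ X), ((g u v : ℤ) - (g v u : ℤ)))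
        = - ∑ v ∈ Finset.univ.filter (· ∈ X),
            ∑ u ∈ Finset.univ.filter (· ∈ X), ((g v u : ℤ) - (g u v : ℤ)) := by
      rw [← Finset.sum_neg_distrib]
      refine Finset.sum_congr rfl fun v _ => ?_
      rw [← Finset.sum_neg_distrib]
      refine Finset.sum_congr rfl fun u _ => ?_
      ring
    linarith [hcomm, hneg]
  have h4 : (∑ v ∈ Finset.univ.filter (· ∈ X), ∑ u : V, ((g v u : ℤ) - (g u v : ℤ)))
      = (∑ v ∈ Finset.univ.filter (· ∈ X),
          ∑ u ∈ Finset.univ.filter (· ∈ X), ((g v u : ℤ) - (g u v : ℤ)))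
      + ∑ v ∈ Finset.univ.filter (· ∈ X),
          ∑ u ∈ Finset.univ.filter (· ∉ X), ((g v u : ℤ) - (g u v : ℤ)) := by
    rw [← Finset.sum_add_distrib]
    exact Finset.sum_congr rfl fun v _ => h2 v
  rw [← h1, h4, h3, zero_add]

end FlowNet

namespace FlowNet

variable {V : Type} [Fintype V]

theorem saturate (N : FlowNet V) (f : V → V → ℕ) (hf : N.IsMaxFlow f) {a b : V}
    (ha : a ∈ N.Sset f) (hb : b ∉ N.Sset f) (g : V → V → ℕ) (hg : N.IsMaxFlow g) :
    g a b = N.c a b := by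
  classical
  set X := N.Sset f with hXdef
  have hs : N.s ∈ X := Relation.ReflTransGen.refl
  have ht : N.t ∉ X := N.no_aug f hf
  have hcross : ∀ v ∈ Finset.univ.filter (· ∈ X), ∀ u ∈ Finset.univ.filter (· ∉ X),
      f v u = N.c v u ∧ f u v = 0 := by
    intro v hv u hu
    rw [Finset.mem_filter] at hv hu
    have hres : ¬ N.ResEdge f v u := fun hr => hu.2 (Relation.ReflTransGen.tail hv.2 hr)
    rw [FlowNet.ResEdge, not_or] at hres
    exact ⟨le_antisymm (hf.1.1 v u) (not_lt.1 hres.1), by omega⟩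
  have h1 := N.value_eq_cross f hf.1 X hs ht
  have h2 := N.value_eq_cross g hg.1 X hs ht
  have hval : N.value g = N.value f := le_antisymm (hf.2 g hg.1) (hg.2 f hf.1)
  have h1' : (N.value f : ℤ) = ∑ p ∈ (Finset.univ.filter (· ∈ X)) ×ˢ (Finset.univ.filter (· ∉ X)),
      (N.c p.1 p.2 : ℤ) := by
    rw [h1, ← Finset.sum_product']
    refine Finset.sum_congr rfl fun p hp => ?_
    rw [Finset.mem_product] at hp
    obtain ⟨he1, he2⟩ := hcross p.1 hp.1 p.2 hp.2
    rw [he1, he2]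
    push_cast
    ring
  have h2' : (N.value g : ℤ) = ∑ p ∈ (Finset.univ.filter (· ∈ X)) ×ˢ (Finset.univ.filter (· ∉ X)),
      ((g p.1 p.2 : ℤ) - (g p.2 p.1 : ℤ)) := by
    rw [h2, ← Finset.sum_product']
  have hle : ∀ p ∈ (Finset.univ.filter (· ∈ X)) ×ˢ (Finset.univ.filter (· ∉ X)),
      ((g p.1 p.2 : ℤ) - (g p.2 p.1 : ℤ)) ≤ (N.c p.1 p.2 : ℤ) := by
    intro p _
    have := hg.1.1 p.1 p.2
    have h0 : (0 : ℤ) ≤ (g p.2 p.1 : ℤ) := by positivity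
    omega
  by_contra hne
  have hmem : (a, b) ∈ (Finset.univ.filter (· ∈ X)) ×ˢ (Finset.univ.filter (· ∉ X)) := by
    rw [Finset.mem_product, Finset.mem_filter, Finset.mem_filter]
    exact ⟨⟨Finset.mem_univ _, ha⟩, Finset.mem_univ _, hb⟩
  have hstrict : ((g a b : ℤ) - (g b a : ℤ)) < (N.c a b : ℤ) := by
    have hlt : g a b < N.c a b := lt_of_le_of_ne (hg.1.1 a b) hne
    have h0 : (0 : ℤ) ≤ (g b a : ℤ) := by positivity
    have : (g a b : ℤ) < (N.c a b : ℤ) := by exact_mod_cast hlt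
    omega
  have := Finset.sum_lt_sum hle ⟨(a, b), hmem, hstrict⟩
  rw [← h2', ← h1', hval] at this
  exact lt_irrefl _ this

end FlowNet

/-- if there is a directed path `s = u 0, u 1, …, u k = w` in the network
with `w ∈ T_f ∪ U_f`, then some edge `(u i, u (i+1))` of the path goes from `S_f` to
`T_f ∪ U_f` and is saturated by every maximum flow. -/
theorem stmt6 {V : Type} [Fintype V] (N : FlowNet V) (f : V → V → ℕ)
    (hf : N.IsMaxFlow f) (k : ℕ) (u : ℕ → V)
    (hu0 : u 0 = N.s)
    (hpath : ∀ i < k, 0 < N.c (u i) (u (i + 1)))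
    (hw : u k ∈ N.Tset f ∪ N.Uset f) :
    ∃ i < k, u i ∈ N.Sset f ∧ u (i + 1) ∈ N.Tset f ∪ N.Uset f ∧
      ∀ g, N.IsMaxFlow g → g (u i) (u (i + 1)) = N.c (u i) (u (i + 1)) := by
  classical
  have hnoaug := N.no_aug f hf
  have hukS : u k ∉ N.Sset f := by
    rcases hw with hT | hU
    · intro hS
      exact hnoaug (Relation.ReflTransGen.trans hS hT)
    · intro hS
      exact hU (Set.mem_union_left _ hS)
  have hk0 : 0 < k := by
    rcases Nat.eq_zero_or_pos k with h' | h'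
    · exfalso
      apply hukS
      rw [h', hu0]
      exact Relation.ReflTransGen.refl
    · exact h'
  have hex : ∃ j, j < k ∧ u (j + 1) ∉ N.Sset f :=
    ⟨k - 1, by omega, by rw [show k - 1 + 1 = k by omega]; exact hukS⟩
  set i := Nat.find hex with hidef
  obtain ⟨hik, hiS⟩ := Nat.find_spec hex
  have hiSmem : u i ∈ N.Sset f := by
    rcases Nat.eq_zero_or_pos i with h' | h'
    · rw [h', hu0]
      exact Relation.ReflTransGen.refl
    · by_contra hc
      have := Nat.find_min hex (show i - 1 < i by omega)
      rw [not_and_or] at this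
      rcases this with h1 | h1
      · omega
      · rw [not_not, show i - 1 + 1 = i by omega] at h1
        exact hc h1
  have hTU : u (i + 1) ∈ N.Tset f ∪ N.Uset f := by
    by_cases hT : u (i + 1) ∈ N.Tset f
    · exact Set.mem_union_left _ hT
    · refine Set.mem_union_right _ ?_
      rw [FlowNet.Uset, Set.mem_compl_iff, Set.mem_union]
      rintro (h' | h')
      · exact hiS h'
      · exact hT h'
  exact ⟨i, hik, hiSmem, hTU, fun g hg => N.saturate f hf hiSmem hiS g hg⟩
end

section
/- Let (V, s, t, c) be a flow network and let f be a maximum flow. Suppose there is a directed path w = u_0, u_1, …, u_k = t in the network (i.e., c u_i u_{i+1} > 0 for every 0 ≤ i < k) with w ∈ S_f ∪ U_f. Then there exists an index i with u_i ∈ S_f ∪ U_f and u_{i+1} ∈ T_f, and every maximum flow g in the network satisfies g u_i u_{i+1} = c u_i u_{i+1} (this edge of the path is saturated by every maximum flow). -/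
open scoped Classical

section Aux

variable {V : Type}


lemma exists_path {r : V → V → Prop} {a b : V} (h : Relation.ReflTransGen r a b) :
    ∃ m, ∃ p : ℕ → V, p 0 = a ∧ p m = b ∧ ∀ i < m, r (p i) (p (i+1)) := by
  induction h with
  | refl => exact ⟨0, fun _ => a, rfl, rfl, by omega⟩
  | @tail b' c' _ hbc ih =>
    obtain ⟨m, p, h0, hm, hc⟩ := ih
    refine ⟨m + 1, fun i => if i ≤ m then p i else c', by simpa using h0, by simp, ?_⟩
    intro i hi
    by_cases h1 : i + 1 ≤ m
    · simp only [if_pos (by omega : i ≤ m), if_pos h1]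
      exact hc i (by omega)
    · have : i = m := by omega
      subst this
      simp only [if_pos le_rfl, if_neg h1, hm]
      exact hbc

lemma exists_inj_path {r : V → V → Prop} {a b : V} (h : Relation.ReflTransGen r a b) :
    ∃ m, ∃ p : ℕ → V, p 0 = a ∧ p m = b ∧ (∀ i < m, r (p i) (p (i+1))) ∧
      ∀ i j, i ≤ m → j ≤ m → p i = p j → i = j := by
  classical
  have hex : ∃ m, ∃ p : ℕ → V, p 0 = a ∧ p m = b ∧ ∀ i < m, r (p i) (p (i+1)) :=
    exists_path h
  obtain ⟨p, h0, hm, hc⟩ := Nat.find_spec hex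
  set m := Nat.find hex with hmdef
  have hmin : ∀ k, k < m → ¬ ∃ p : ℕ → V, p 0 = a ∧ p k = b ∧ ∀ i < k, r (p i) (p (i+1)) :=
    fun k hk => Nat.find_min hex hk
  refine ⟨m, p, h0, hm, hc, ?_⟩
  have key : ∀ i j, i ≤ m → j ≤ m → i < j → p i ≠ p j := by
    intro i j hi hj hij heq
    have hnew : ∃ q : ℕ → V, q 0 = a ∧ q (m - (j-i)) = b ∧
        ∀ x < m - (j-i), r (q x) (q (x+1)) := by
      refine ⟨fun x => if x ≤ i then p x else p (x + (j-i)), by simpa using h0, ?_, ?_⟩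
      · by_cases hle : m - (j-i) ≤ i
        · have e1 : m - (j-i) = i := by omega
          have e2 : j = m := by omega
          simp only [if_pos hle, e1]
          rw [heq, e2]
          simpa using hm
        · have e1 : m - (j-i) + (j-i) = m := by omega
          simp only [if_neg hle, e1, hm]
      · intro x hx
        by_cases h1 : x + 1 ≤ i
        · simp only [if_pos (by omega : x ≤ i), if_pos h1]
          exact hc x (by omega)
        · by_cases h2 : x ≤ i
          · have hxi : x = i := by omega
            simp only [if_pos h2, if_neg h1]
            rw [hxi, heq, show i + 1 + (j-i) = j + 1 by omega]
            exact hc j (by omega)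
          · simp only [if_neg h2, if_neg h1]
            rw [show x + 1 + (j-i) = x + (j-i) + 1 by omega]
            exact hc (x + (j-i)) (by omega)
    exact hmin (m - (j-i)) (by omega) hnew
  intro i j hi hj heq
  by_contra hne
  rcases lt_or_gt_of_ne hne with hlt | hlt
  · exact key i j hi hj hlt heq
  · exact key j i hj hi hlt heq.symm


section Aug

open Finset

lemma indic_le_one {m : ℕ} {P : ℕ → Prop} [DecidablePred P]
    (h : ∀ i j, i ∈ Finset.range m → j ∈ Finset.range m → P i → P j → i = j) :
    (∑ i ∈ Finset.range m, if P i then 1 else 0) ≤ 1 := by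
  rw [Finset.sum_boole, Nat.cast_id]
  apply Finset.card_le_one.mpr
  intro a ha b hb
  rw [Finset.mem_filter] at ha hb
  exact h a b ha.1 hb.1 ha.2 hb.2

lemma indic_pos {m : ℕ} {P : ℕ → Prop} [DecidablePred P]
    (h : 0 < ∑ i ∈ Finset.range m, if P i then 1 else 0) :
    ∃ i ∈ Finset.range m, P i := by
  by_contra hc
  push_neg at hc
  have hz : ∀ i ∈ Finset.range m, (if P i then (1:ℕ) else 0) = 0 := by
    intro i hi; simp [hc i hi]
  rw [Finset.sum_eq_zero hz] at h; omega

lemma FlowNet.aug {V : Type} [Fintype V] (N : FlowNet V) (f : V → V → ℕ)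
    (hf : N.IsFlow f) (h : Relation.ReflTransGen (N.ResEdge f) N.s N.t) :
    ∃ f', N.IsFlow f' ∧ N.value f < N.value f' := by
  classical
  obtain ⟨m, p, h0, hm, hc, hinj⟩ := exists_inj_path h
  have hm0 : 0 < m := by
    by_contra h'
    have hz : m = 0 := by omega
    apply N.hst
    rw [← h0, ← hm, hz]
  set fwd : ℕ → Prop := fun i => f (p i) (p (i+1)) < N.c (p i) (p (i+1)) with hfwddef
  have hback : ∀ i, i < m → ¬ fwd i → 0 < f (p (i+1)) (p i) := by
    intro i hi hnf
    rcases hc i hi with h' | h'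
    · exact absurd h' hnf
    · exact h'
  set inc : V → V → ℕ :=
    fun a b => ∑ i ∈ Finset.range m, if p i = a ∧ p (i+1) = b ∧ fwd i then 1 else 0
    with hincdef
  set dec : V → V → ℕ :=
    fun a b => ∑ i ∈ Finset.range m, if p i = b ∧ p (i+1) = a ∧ ¬ fwd i then 1 else 0
    with hdecdef
  have inc_le_one : ∀ a b, inc a b ≤ 1 := by
    intro a b
    simp only [hincdef]
    refine indic_le_one ?_
    intro i j hi hj hPi hPj
    rw [Finset.mem_range] at hi hj
    exact hinj i j (le_of_lt hi) (le_of_lt hj) (hPi.1.trans hPj.1.symm)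
  have dec_le_one : ∀ a b, dec a b ≤ 1 := by
    intro a b
    simp only [hdecdef]
    refine indic_le_one ?_
    intro i j hi hj hPi hPj
    rw [Finset.mem_range] at hi hj
    exact hinj i j (le_of_lt hi) (le_of_lt hj) (hPi.1.trans hPj.1.symm)
  have inc_lt : ∀ a b, 0 < inc a b → f a b < N.c a b := by
    intro a b hpos
    simp only [hincdef] at hpos
    obtain ⟨i, hi, e1, e2, e3⟩ := indic_pos hpos
    rw [← e1, ← e2]
    exact e3
  have dec_pos : ∀ a b, 0 < dec a b → 0 < f a b := by
    intro a b hpos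
    simp only [hdecdef] at hpos
    obtain ⟨i, hi, e1, e2, e3⟩ := indic_pos hpos
    rw [Finset.mem_range] at hi
    have hb := hback i hi e3
    rwa [e1, e2] at hb
  have dec_le : ∀ a b, dec a b ≤ f a b := by
    intro a b
    rcases Nat.eq_zero_or_pos (dec a b) with h' | h'
    · omega
    · have h1 := dec_pos a b h'
      have h2 := dec_le_one a b
      omega
  -- collapse lemmas
  have coll1 : ∀ w : V, (∑ a, inc a w)
      = ∑ i ∈ Finset.range m, if p (i+1) = w ∧ fwd i then 1 else 0 := by
    intro w
    simp only [hincdef]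
    rw [Finset.sum_comm]
    apply Finset.sum_congr rfl
    intro i _
    by_cases hQ : p (i+1) = w ∧ fwd i
    · simp [hQ.1, hQ.2, Finset.sum_ite_eq]
    · rw [if_neg hQ]
      apply Finset.sum_eq_zero
      intro a _
      rw [if_neg]
      tauto
  have coll2 : ∀ w : V, (∑ a, inc w a)
      = ∑ i ∈ Finset.range m, if p i = w ∧ fwd i then 1 else 0 := by
    intro w
    simp only [hincdef]
    rw [Finset.sum_comm]
    apply Finset.sum_congr rfl
    intro i _
    by_cases hQ : p i = w ∧ fwd i
    · simp [hQ.1, hQ.2, Finset.sum_ite_eq]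
    · rw [if_neg hQ]
      apply Finset.sum_eq_zero
      intro a _
      rw [if_neg]
      tauto
  have coll3 : ∀ w : V, (∑ a, dec a w)
      = ∑ i ∈ Finset.range m, if p i = w ∧ ¬ fwd i then 1 else 0 := by
    intro w
    simp only [hdecdef]
    rw [Finset.sum_comm]
    apply Finset.sum_congr rfl
    intro i _
    by_cases hQ : p i = w ∧ ¬ fwd i
    · simp [hQ.1, hQ.2, Finset.sum_ite_eq]
    · rw [if_neg hQ]
      apply Finset.sum_eq_zero
      intro a _
      rw [if_neg]
      tauto
  have coll4 : ∀ w : V, (∑ a, dec w a)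
      = ∑ i ∈ Finset.range m, if p (i+1) = w ∧ ¬ fwd i then 1 else 0 := by
    intro w
    simp only [hdecdef]
    rw [Finset.sum_comm]
    apply Finset.sum_congr rfl
    intro i _
    by_cases hQ : p (i+1) = w ∧ ¬ fwd i
    · simp [hQ.1, hQ.2, Finset.sum_ite_eq]
    · rw [if_neg hQ]
      apply Finset.sum_eq_zero
      intro a _
      rw [if_neg]
      tauto
  have comb : ∀ (A B : ℕ → Prop),
      (∑ i ∈ Finset.range m, if A i ∧ B i then (1:ℕ) else 0)
        + (∑ i ∈ Finset.range m, if A i ∧ ¬ B i then 1 else 0)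
      = ∑ i ∈ Finset.range m, if A i then (1:ℕ) else 0 := by
    intro A B
    rw [← Finset.sum_add_distrib]
    apply Finset.sum_congr rfl
    intro i _
    by_cases hA : A i <;> by_cases hB : B i <;> simp [hA, hB]
  refine ⟨fun a b => f a b + inc a b - dec a b, ⟨?_, ?_⟩, ?_⟩
  · -- capacity
    intro a b
    rcases Nat.eq_zero_or_pos (inc a b) with h' | h'
    · have := hf.1 a b
      simp only [h']
      omega
    · have h1 := inc_lt a b h'
      have h2 := inc_le_one a b
      simp only []
      omega
  · -- conservation
    intro v hvs hvt
    have e_in : (∑ a, (f a v + inc a v - dec a v)) + ∑ a, dec a v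
        = (∑ a, f a v) + ∑ a, inc a v := by
      rw [← Finset.sum_add_distrib, ← Finset.sum_add_distrib]
      apply Finset.sum_congr rfl
      intro a _
      have h1 := dec_le a v
      omega
    have e_out : (∑ a, (f v a + inc v a - dec v a)) + ∑ a, dec v a
        = (∑ a, f v a) + ∑ a, inc v a := by
      rw [← Finset.sum_add_distrib, ← Finset.sum_add_distrib]
      apply Finset.sum_congr rfl
      intro a _
      have h1 := dec_le v a
      omega
    have shift : (∑ i ∈ Finset.range m, if p (i+1) = v then (1:ℕ) else 0)
        = ∑ i ∈ Finset.range m, if p i = v then (1:ℕ) else 0 := by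
      have g0 : (if p 0 = v then (1:ℕ) else 0) = 0 := by
        rw [if_neg]
        rw [h0]
        exact fun e => hvs e.symm
      have gm : (if p m = v then (1:ℕ) else 0) = 0 := by
        rw [if_neg]
        rw [hm]
        exact fun e => hvt e.symm
      have t1 := Finset.sum_range_succ (fun i => if p i = v then (1:ℕ) else 0) m
      have t2 := Finset.sum_range_succ' (fun i => if p i = v then (1:ℕ) else 0) m
      omega
    have key : (∑ a, inc a v) + (∑ a, dec v a)
        = (∑ a, inc v a) + (∑ a, dec a v) := by
      rw [coll1 v, coll2 v, coll3 v, coll4 v]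
      have c1 : (∑ i ∈ Finset.range m, if p (i+1) = v ∧ fwd i then (1:ℕ) else 0)
          + (∑ i ∈ Finset.range m, if p (i+1) = v ∧ ¬ fwd i then (1:ℕ) else 0)
          = ∑ i ∈ Finset.range m, if p (i+1) = v then (1:ℕ) else 0 := by
        rw [← Finset.sum_add_distrib]
        apply Finset.sum_congr rfl
        intro i _
        by_cases hA : p (i+1) = v <;> by_cases hB : fwd i <;> simp [hA, hB]
      have c2 : (∑ i ∈ Finset.range m, if p i = v ∧ fwd i then (1:ℕ) else 0)
          + (∑ i ∈ Finset.range m, if p i = v ∧ ¬ fwd i then (1:ℕ) else 0)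
          = ∑ i ∈ Finset.range m, if p i = v then (1:ℕ) else 0 := by
        rw [← Finset.sum_add_distrib]
        apply Finset.sum_congr rfl
        intro i _
        by_cases hA : p i = v <;> by_cases hB : fwd i <;> simp [hA, hB]
      rw [c1, c2]
      exact shift
    have hcons := hf.2 v hvs hvt
    show (∑ a, (f a v + inc a v - dec a v)) = ∑ a, (f v a + inc v a - dec v a)
    omega
  · -- value increases
    have hfwd0 : fwd 0 := by
      by_contra hq
      have hb := hback 0 hm0 hq
      rw [h0] at hb
      have h2 := hf.1 (p (0+1)) N.s
      rw [N.c_to_s] at h2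
      omega
    have decs : ∀ b, dec N.s b = 0 := by
      intro b
      simp only [hdecdef]
      apply Finset.sum_eq_zero
      intro i hi
      rw [Finset.mem_range] at hi
      rw [if_neg]
      rintro ⟨e1, e2, e3⟩
      have := hinj (i+1) 0 (by omega) (by omega) (by rw [e2, h0])
      omega
    have incs : (∑ b, inc N.s b) = 1 := by
      rw [coll2 N.s]
      rw [Finset.sum_eq_single 0]
      · rw [if_pos ⟨h0, hfwd0⟩]
      · intro i hi hne
        rw [Finset.mem_range] at hi
        rw [if_neg]
        rintro ⟨e1, _⟩
        exact hne (hinj i 0 (by omega) (by omega) (by rw [e1, h0]))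
      · intro h'
        exact absurd (Finset.mem_range.mpr hm0) h'
    show N.value f < ∑ b, (f N.s b + inc N.s b - dec N.s b)
    have e1 : (∑ b, (f N.s b + inc N.s b - dec N.s b)) = (∑ b, f N.s b) + 1 := by
      rw [Finset.sum_congr rfl (fun b _ => by rw [decs b, Nat.sub_zero]),
        Finset.sum_add_distrib, incs]
    rw [FlowNet.value, e1]
    omega

end Aug

end Aux

section Cut

variable {V : Type} [Fintype V]

lemma FlowNet.cut_identity (N : FlowNet V) (f : V → V → ℕ) (hf : N.IsFlow f)
    (X : Set V) (hs : N.s ∈ X) (ht : N.t ∉ X) :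
    N.value f + (∑ u, ∑ v, if u ∉ X ∧ v ∈ X then f u v else 0)
      = ∑ u, ∑ v, if u ∈ X ∧ v ∉ X then f u v else 0 := by
  classical
  have f_to_s : ∀ a, f a N.s = 0 := by
    intro a
    have h1 := hf.1 a N.s
    rw [N.c_to_s] at h1
    omega
  have claim1 : (∑ v, if v ∈ X then (∑ a, f v a) else 0)
      = (∑ v, if v ∈ X then (∑ a, f a v) else 0) + N.value f := by
    have hterm : ∀ v : V, (if v ∈ X then (∑ a, f v a) else 0)
        = (if v ∈ X then (∑ a, f a v) else 0) + (if v = N.s then N.value f else 0) := by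
      intro v
      by_cases hv : v = N.s
      · subst hv
        rw [if_pos hs, if_pos hs, if_pos rfl]
        have hz : (∑ a, f a N.s) = 0 := Finset.sum_eq_zero (fun a _ => f_to_s a)
        rw [hz, zero_add]
        rfl
      · by_cases hv2 : v ∈ X
        · rw [if_pos hv2, if_pos hv2, if_neg hv, add_zero]
          exact (hf.2 v hv (fun e => ht (e ▸ hv2))).symm
        · rw [if_neg hv2, if_neg hv2, if_neg hv, add_zero]
    rw [Finset.sum_congr rfl (fun v _ => hterm v), Finset.sum_add_distrib]
    congr 1
    simp [Finset.sum_ite_eq']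
  have split1 : (∑ v, if v ∈ X then (∑ a, f v a) else 0)
      = (∑ v, ∑ a, if v ∈ X ∧ a ∈ X then f v a else 0)
        + (∑ v, ∑ a, if v ∈ X ∧ a ∉ X then f v a else 0) := by
    rw [← Finset.sum_add_distrib]
    apply Finset.sum_congr rfl
    intro v _
    rw [← Finset.sum_add_distrib]
    by_cases hv : v ∈ X
    · rw [if_pos hv]
      apply Finset.sum_congr rfl
      intro a _
      by_cases ha : a ∈ X <;> simp [hv, ha]
    · rw [if_neg hv]
      symm
      apply Finset.sum_eq_zero
      intro a _
      simp [hv]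
  have split2 : (∑ v, if v ∈ X then (∑ a, f a v) else 0)
      = (∑ v, ∑ a, if v ∈ X ∧ a ∈ X then f a v else 0)
        + (∑ v, ∑ a, if v ∈ X ∧ a ∉ X then f a v else 0) := by
    rw [← Finset.sum_add_distrib]
    apply Finset.sum_congr rfl
    intro v _
    rw [← Finset.sum_add_distrib]
    by_cases hv : v ∈ X
    · rw [if_pos hv]
      apply Finset.sum_congr rfl
      intro a _
      by_cases ha : a ∈ X <;> simp [hv, ha]
    · rw [if_neg hv]
      symm
      apply Finset.sum_eq_zero
      intro a _
      simp [hv]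
  have hI : (∑ v, ∑ a, if v ∈ X ∧ a ∈ X then f v a else 0)
      = (∑ v, ∑ a, if v ∈ X ∧ a ∈ X then f a v else 0) := by
    rw [Finset.sum_comm]
    apply Finset.sum_congr rfl
    intro v _
    apply Finset.sum_congr rfl
    intro a _
    exact if_congr and_comm rfl rfl
  have hB : (∑ u, ∑ v, if u ∉ X ∧ v ∈ X then f u v else 0)
      = ∑ v, ∑ a, if v ∈ X ∧ a ∉ X then f a v else 0 := by
    rw [Finset.sum_comm]
    apply Finset.sum_congr rfl
    intro v _
    apply Finset.sum_congr rfl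
    intro a _
    exact if_congr and_comm rfl rfl
  omega

lemma FlowNet.flow_le_crossing (N : FlowNet V) (g : V → V → ℕ) (hg : N.IsFlow g)
    (X : Set V) :
    (∑ u, ∑ v, if u ∈ X ∧ v ∉ X then g u v else 0) ≤ N.cap X := by
  rw [FlowNet.cap]
  apply Finset.sum_le_sum
  intro a _
  apply Finset.sum_le_sum
  intro b _
  split_ifs with h
  · exact hg.1 a b
  · exact le_rfl

lemma FlowNet.Tset_sat (N : FlowNet V) (f : V → V → ℕ) (hf : N.IsFlow f)
    {a b : V} (ha : a ∉ N.Tset f) (hb : b ∈ N.Tset f) :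
    f a b = N.c a b ∧ f b a = 0 := by
  have hne : ¬ N.ResEdge f a b := fun he => ha (Relation.ReflTransGen.head he hb)
  rw [FlowNet.ResEdge] at hne
  push_neg at hne
  obtain ⟨h1, h2⟩ := hne
  exact ⟨le_antisymm (hf.1 a b) h1, by omega⟩

lemma FlowNet.s_not_Tset (N : FlowNet V) (f : V → V → ℕ) (hf : N.IsMaxFlow f) :
    N.s ∉ N.Tset f := by
  intro hs
  obtain ⟨f', hf', hlt⟩ := N.aug f hf.1 hs
  have := hf.2 f' hf'
  omega

end Cut

/-- if there is a directed path `w = u 0, u 1, …, u k = t` in the network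
with `w ∈ S_f ∪ U_f`, then some edge `(u i, u (i+1))` of the path goes from `S_f ∪ U_f`
to `T_f` and is saturated by every maximum flow. -/
theorem stmt8 {V : Type} [Fintype V] (N : FlowNet V) (f : V → V → ℕ)
    (hf : N.IsMaxFlow f) (k : ℕ) (u : ℕ → V)
    (huk : u k = N.t)
    (hpath : ∀ i < k, 0 < N.c (u i) (u (i + 1)))
    (hw : u 0 ∈ N.Sset f ∪ N.Uset f) :
    ∃ i < k, u i ∈ N.Sset f ∪ N.Uset f ∧ u (i + 1) ∈ N.Tset f ∧
      ∀ g, N.IsMaxFlow g → g (u i) (u (i + 1)) = N.c (u i) (u (i + 1)) := by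
  obtain ⟨X, hX⟩ : ∃ X : Set V, X = (N.Tset f)ᶜ := ⟨_, rfl⟩
  have hsX : N.s ∈ X := by rw [hX]; exact N.s_not_Tset f hf
  have htT : N.t ∈ N.Tset f := Relation.ReflTransGen.refl
  have htX : N.t ∉ X := by rw [hX]; exact fun h' => h' htT
  have hFc : (∑ a, ∑ b, if a ∈ X ∧ b ∉ X then f a b else 0) = N.cap X := by
    rw [FlowNet.cap]
    apply Finset.sum_congr rfl
    intro a _
    apply Finset.sum_congr rfl
    intro b _
    split_ifs with h
    · rw [hX] at h
      exact (N.Tset_sat f hf.1 h.1 (not_not.mp h.2)).1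
    · rfl
  have hB0 : (∑ a, ∑ b, if a ∉ X ∧ b ∈ X then f a b else 0) = 0 := by
    apply Finset.sum_eq_zero
    intro a _
    apply Finset.sum_eq_zero
    intro b _
    split_ifs with h
    · rw [hX] at h
      exact (N.Tset_sat f hf.1 h.2 (not_not.mp h.1)).2
    · rfl
  have hvc : N.value f = N.cap X := by
    have hci := N.cut_identity f hf.1 X hsX htX
    omega
  have hT0 : u 0 ∉ N.Tset f := by
    rcases hw with hS | hU
    · exact fun hT => (N.s_not_Tset f hf) (Relation.ReflTransGen.trans hS hT)
    · exact fun hT => hU (Or.inr hT)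
  have hexP : ∃ j, u j ∈ N.Tset f := ⟨k, by rw [huk]; exact htT⟩
  set j := Nat.find hexP with hjdef
  have hj : u j ∈ N.Tset f := Nat.find_spec hexP
  have hjle : j ≤ k := Nat.find_le (by rw [huk]; exact htT)
  have hj0 : j ≠ 0 := fun e => hT0 (e ▸ hj)
  have hmem : u (j - 1) ∉ N.Tset f := Nat.find_min hexP (by omega)
  have hj1 : j - 1 + 1 = j := by omega
  refine ⟨j - 1, by omega, ?_, ?_, ?_⟩
  · by_cases hS : u (j-1) ∈ N.Sset f
    · exact Or.inl hS
    · refine Or.inr ?_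
      intro hmem2
      rcases hmem2 with h' | h'
      · exact hS h'
      · exact hmem h'
  · rw [hj1]
    exact hj
  · intro g hg
    have hvg : N.value g = N.value f := le_antisymm (hf.2 g hg.1) (hg.2 f hf.1)
    have hci := N.cut_identity g hg.1 X hsX htX
    have hwd := N.flow_le_crossing g hg.1 X
    have hFg : (∑ a, ∑ b, if a ∈ X ∧ b ∉ X then g a b else 0) = N.cap X := by omega
    rw [FlowNet.cap] at hFg
    have hle2 : ∀ a ∈ (Finset.univ : Finset V),
        (∑ b, if a ∈ X ∧ b ∉ X then g a b else 0)
          ≤ ∑ b, if a ∈ X ∧ b ∉ X then N.c a b else 0 := by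
      intro a _
      apply Finset.sum_le_sum
      intro b _
      split_ifs with h
      · exact hg.1.1 a b
      · exact le_rfl
    have h1 := (Finset.sum_eq_sum_iff_of_le hle2).mp hFg (u (j-1)) (Finset.mem_univ _)
    have hle3 : ∀ b ∈ (Finset.univ : Finset V),
        (if u (j-1) ∈ X ∧ b ∉ X then g (u (j-1)) b else 0)
          ≤ if u (j-1) ∈ X ∧ b ∉ X then N.c (u (j-1)) b else 0 := by
      intro b _
      split_ifs with h
      · exact hg.1.1 (u (j-1)) b
      · exact le_rfl
    have h2 := (Finset.sum_eq_sum_iff_of_le hle3).mp h1 (u (j-1+1)) (Finset.mem_univ _)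
    have hcond : u (j-1) ∈ X ∧ u (j-1+1) ∉ X := by
      rw [hX]
      constructor
      · exact hmem
      · rw [hj1]
        exact fun h' => h' hj
    rw [if_pos hcond, if_pos hcond] at h2
    exact h2
end

section
/- Let G = (A ∪ P, E) be an instance of the classified matching problem in which every classification 𝒞_u is laminar, and let X be the associated flow network. Then: (1) for every feasible matching M of G there is a flow g in X of value |M| such that, for every edge (a, p) ∈ E, g((a, {p}), (p, {a})) = 1 if (a, p) ∈ M and g((a, {p}), (p, {a})) = 0 otherwise; and (2) conversely, for every flow g in X, the set M = {(a, p) ∈ E : g((a, {p}), (p, {a})) = 1} is a feasible matching of G whose cardinality equals the value of g. -/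
open scoped Classical

/-- Vertices of the flow network associated to a classified matching instance:
a source, a sink, a node `(a, C)` for each applicant class, and a node `(p, C)`
for each post class. -/
inductive XV (A P : Type) where
  | src : XV A P
  | snk : XV A P
  | app (a : A) (C : Finset P) : XV A P
  | post (p : P) (C : Finset A) : XV A P
  deriving DecidableEq, Fintype

/-- An instance of the classified matching problem: a bipartite graph `E ⊆ A × P`,
quotas on vertices, and for every vertex a classification of its neighborhood, each class
with a quota, required to contain the full neighborhood (with the vertex quota) and all
singletons of neighbors (with quota 1). -/
structure CMI (A P : Type) [Fintype A] [Fintype P] [DecidableEq A] [DecidableEq P] where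
  E : Finset (A × P)
  qA : A → ℕ
  qP : P → ℕ
  qA_pos : ∀ a, 1 ≤ qA a
  qP_pos : ∀ p, 1 ≤ qP p
  CA : A → Finset (Finset P)
  CP : P → Finset (Finset A)
  qCA : A → Finset P → ℕ
  qCP : P → Finset A → ℕ
  CA_sub : ∀ a, ∀ C ∈ CA a, C.Nonempty ∧ ∀ p ∈ C, (a, p) ∈ E
  CP_sub : ∀ p, ∀ C ∈ CP p, C.Nonempty ∧ ∀ a ∈ C, (a, p) ∈ E
  qCA_pos : ∀ a, ∀ C ∈ CA a, 1 ≤ qCA a C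
  qCP_pos : ∀ p, ∀ C ∈ CP p, 1 ≤ qCP p C
  CA_full : ∀ a, ((E.filter fun e => e.1 = a).image Prod.snd) ∈ CA a ∧
      qCA a ((E.filter fun e => e.1 = a).image Prod.snd) = qA a
  CP_full : ∀ p, ((E.filter fun e => e.2 = p).image Prod.fst) ∈ CP p ∧
      qCP p ((E.filter fun e => e.2 = p).image Prod.fst) = qP p
  CA_single : ∀ a p, (a, p) ∈ E → {p} ∈ CA a ∧ qCA a {p} = 1
  CP_single : ∀ a p, (a, p) ∈ E → {a} ∈ CP p ∧ qCP p {a} = 1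

namespace CMI

variable {A P : Type} [Fintype A] [Fintype P] [DecidableEq A] [DecidableEq P]

/-- The neighborhood of an applicant. -/
def NA (I : CMI A P) (a : A) : Finset P := (I.E.filter fun e => e.1 = a).image Prod.snd

/-- The neighborhood of a post. -/
def NP (I : CMI A P) (p : P) : Finset A := (I.E.filter fun e => e.2 = p).image Prod.fst

/-- `I.Laminar` : every classification is a laminar family. -/
def Laminar (I : CMI A P) : Prop :=
  (∀ a, ∀ C ∈ I.CA a, ∀ D ∈ I.CA a, C ⊆ D ∨ D ⊆ C ∨ Disjoint C D) ∧
  (∀ p, ∀ C ∈ I.CP p, ∀ D ∈ I.CP p, C ⊆ D ∨ D ⊆ C ∨ Disjoint C D)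

/-- `C` is the parent of `C'` in the classification tree of applicant `a`:
the smallest class of `𝒞_a` properly containing `C'`. -/
def parA (I : CMI A P) (a : A) (C C' : Finset P) : Prop :=
  C ∈ I.CA a ∧ C' ∈ I.CA a ∧ C' ⊂ C ∧ ∀ D ∈ I.CA a, C' ⊂ D → C ⊆ D

/-- `C` is the parent of `C'` in the classification tree of post `p`. -/
def parP (I : CMI A P) (p : P) (C C' : Finset A) : Prop :=
  C ∈ I.CP p ∧ C' ∈ I.CP p ∧ C' ⊂ C ∧ ∀ D ∈ I.CP p, C' ⊂ D → C ⊆ D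

/-- Capacities of the associated flow network `X`. -/
noncomputable def cap (I : CMI A P) : XV A P → XV A P → ℕ
  | .src, .app a C => if C = I.NA a then I.qA a else 0
  | .app a C, .app a' C' => if a = a' ∧ I.parA a C C' then I.qCA a C' else 0
  | .app a C, .post p C' => if C = {p} ∧ C' = {a} ∧ (a, p) ∈ I.E then 1 else 0
  | .post p C', .post p' C => if p = p' ∧ I.parP p C C' then I.qCP p C' else 0
  | .post p C, .snk => if C = I.NP p then I.qP p else 0
  | _, _ => 0

/-- A flow in the associated flow network. -/
def IsFlow (I : CMI A P) (g : XV A P → XV A P → ℕ) : Prop :=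
  (∀ u v, g u v ≤ I.cap u v) ∧
  ∀ v : XV A P, v ≠ .src → v ≠ .snk → (∑ u, g u v) = ∑ u, g v u

/-- The value of a flow: total flow out of the source. -/
def value (I : CMI A P) (g : XV A P → XV A P → ℕ) : ℕ := ∑ v, g .src v

/-- A feasible matching: a subset of the edges respecting all class quotas. -/
def Feasible (I : CMI A P) (M : Finset (A × P)) : Prop :=
  M ⊆ I.E ∧
  (∀ a, ∀ C ∈ I.CA a, (M.filter fun e => e.1 = a ∧ e.2 ∈ C).card ≤ I.qCA a C) ∧
  (∀ p, ∀ C ∈ I.CP p, (M.filter fun e => e.2 = p ∧ e.1 ∈ C).card ≤ I.qCP p C)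

end CMI

open scoped Classical
open Finset

section Abstract
variable {α : Type} [DecidableEq α]

set_option linter.unusedSectionVars false

/-- Laminar family. -/
def Lam (F : Finset (Finset α)) : Prop :=
  ∀ C ∈ F, ∀ D ∈ F, C ⊆ D ∨ D ⊆ C ∨ Disjoint C D

/-- `C` is the parent of `C'` in `F`. -/
def Par (F : Finset (Finset α)) (C C' : Finset α) : Prop :=
  C ∈ F ∧ C' ∈ F ∧ C' ⊂ C ∧ ∀ D ∈ F, C' ⊂ D → C ⊆ D

lemma par_unique {F : Finset (Finset α)} {C1 C2 C' : Finset α}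
    (h1 : Par F C1 C') (h2 : Par F C2 C') : C1 = C2 :=
  Finset.Subset.antisymm (h1.2.2.2 C2 h2.1 h2.2.2.1) (h2.2.2.2 C1 h1.1 h1.2.2.1)

lemma par_exists {F : Finset (Finset α)} {C' D : Finset α} (hF : Lam F)
    (hC' : C' ∈ F) (hne : C'.Nonempty) (hD : D ∈ F) (hsub : C' ⊂ D) :
    ∃ C, Par F C C' := by
  obtain ⟨m, hm, hmin⟩ := (F.filter fun X => C' ⊂ X).exists_min_image Finset.card
    ⟨D, by simp [hD, hsub]⟩
  simp only [mem_filter] at hm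
  refine ⟨m, hm.1, hC', hm.2, ?_⟩
  intro D' hD' hsubD'
  rcases hF m hm.1 D' hD' with h | h | h
  · exact h
  · have hcard := hmin D' (by simp [hD', hsubD'])
    have heq : D' = m := Finset.eq_of_subset_of_card_le h hcard
    exact heq ▸ Finset.Subset.refl _
  · obtain ⟨x, hx⟩ := hne
    exact absurd (hsubD'.subset hx) (Finset.disjoint_left.1 h (hm.2.subset hx))

lemma child_mem {F : Finset (Finset α)} {C : Finset α} {x : α} (hF : Lam F)
    (hC : C ∈ F) (hx : x ∈ C) (hxF : ({x} : Finset α) ∈ F) (hne : C ≠ {x}) :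
    ∃ D, Par F C D ∧ x ∈ D := by
  obtain ⟨m, hm, hmax⟩ := (F.filter fun X => x ∈ X ∧ X ⊂ C).exists_max_image Finset.card
    ⟨{x}, by
      refine mem_filter.2 ⟨hxF, Finset.mem_singleton_self x, ?_⟩
      exact Finset.ssubset_iff_subset_ne.2 ⟨Finset.singleton_subset_iff.2 hx, fun h => hne h.symm⟩⟩
  simp only [mem_filter] at hm
  refine ⟨m, ⟨hC, hm.1, hm.2.2, ?_⟩, hm.2.1⟩
  intro E hE hsubE
  rcases hF C hC E hE with h | h | h
  · exact h
  · rcases h.ssubset_or_eq with h' | h'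
    · have hcard := hmax E (mem_filter.2 ⟨hE, hsubE.subset hm.2.1, h'⟩)
      exact absurd (Finset.card_lt_card hsubE) (not_lt.2 hcard)
    · exact h' ▸ Finset.Subset.refl _
  · exact absurd (hsubE.subset hm.2.1) (Finset.disjoint_left.1 h hx)

lemma child_unique {F : Finset (Finset α)} {C D1 D2 : Finset α} {x : α} (hF : Lam F)
    (h1 : Par F C D1) (h2 : Par F C D2) (hx1 : x ∈ D1) (hx2 : x ∈ D2) : D1 = D2 := by
  have key : ∀ {E1 E2 : Finset α}, Par F C E1 → Par F C E2 → E1 ⊆ E2 → E1 = E2 := by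
    intro E1 E2 hp1 hp2 hsub
    rcases hsub.ssubset_or_eq with h' | h'
    · exact absurd (hp1.2.2.2 E2 hp2.2.1 h') hp2.2.2.1.not_subset
    · exact h'
  rcases hF D1 h1.2.1 D2 h2.2.1 with h | h | h
  · exact key h1 h2 h
  · exact (key h2 h1 h).symm
  · exact absurd hx2 (Finset.disjoint_left.1 h hx1)

/-- The children of a non-singleton class partition it (membership version). -/
lemma mem_iff_child {F : Finset (Finset α)} {C : Finset α} (hF : Lam F)
    (hC : C ∈ F) (hsing : ∀ x ∈ C, ({x} : Finset α) ∈ F) (hns : ∀ x, C ≠ {x}) (x : α) :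
    x ∈ C ↔ ∃ D ∈ F.filter (fun D => Par F C D), x ∈ D := by
  constructor
  · intro hx
    obtain ⟨D, hD, hxD⟩ := child_mem hF hC hx (hsing x hx) (hns x)
    exact ⟨D, mem_filter.2 ⟨hD.2.1, hD⟩, hxD⟩
  · rintro ⟨D, hD, hxD⟩
    exact (mem_filter.1 hD).2.2.2.1.subset hxD

lemma sum_children {F : Finset (Finset α)} {C : Finset α} (hF : Lam F)
    (hC : C ∈ F) (hsing : ∀ x ∈ C, ({x} : Finset α) ∈ F) (hns : ∀ x, C ≠ {x}) (w : α → ℕ) :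
    ∑ D ∈ F.filter (fun D => Par F C D), ∑ x ∈ D, w x = ∑ x ∈ C, w x := by
  rw [← Finset.sum_biUnion]
  · congr 1
    ext x
    simp only [mem_biUnion]
    exact (mem_iff_child hF hC hsing hns x).symm
  · intro D1 h1 D2 h2 hne
    simp only [Finset.coe_filter, Set.mem_setOf_eq] at h1 h2
    exact Finset.disjoint_left.2 fun x hx1 hx2 => hne (child_unique hF h1.2 h2.2 hx1 hx2)

lemma no_child_singleton {F : Finset (Finset α)} {x : α} {D : Finset α}
    (hneF : ∀ D ∈ F, (D : Finset α).Nonempty) (h : Par F {x} D) : False := by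
  obtain ⟨y, hy⟩ := hneF D h.2.1
  have := h.2.2.1.subset hy
  rw [Finset.mem_singleton] at this
  subst this
  exact h.2.2.1.not_subset (Finset.singleton_subset_iff.2 hy)

lemma no_par_top {F : Finset (Finset α)} {C D : Finset α}
    (htop : ∀ X ∈ F, X ⊆ C) (h : Par F D C) : False :=
  h.2.2.1.not_subset (htop D h.1)

namespace CMI

variable {A P : Type} [Fintype A] [Fintype P] [DecidableEq A] [DecidableEq P]
variable {I : CMI A P}

lemma mem_NA {a : A} {p : P} : p ∈ I.NA a ↔ (a, p) ∈ I.E := by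
  constructor
  · rintro hp
    obtain ⟨e, he, rfl⟩ := Finset.mem_image.1 hp
    obtain ⟨heE, he1⟩ := Finset.mem_filter.1 he
    rwa [← he1, Prod.mk.eta]
  · intro h
    exact Finset.mem_image.2 ⟨(a, p), Finset.mem_filter.2 ⟨h, rfl⟩, rfl⟩

lemma mem_NP {a : A} {p : P} : a ∈ I.NP p ↔ (a, p) ∈ I.E := by
  constructor
  · rintro hp
    obtain ⟨e, he, rfl⟩ := Finset.mem_image.1 hp
    obtain ⟨heE, he1⟩ := Finset.mem_filter.1 he
    rwa [← he1, Prod.mk.eta]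
  · intro h
    exact Finset.mem_image.2 ⟨(a, p), Finset.mem_filter.2 ⟨h, rfl⟩, rfl⟩

lemma sub_NA {a : A} {C : Finset P} (hC : C ∈ I.CA a) : C ⊆ I.NA a :=
  fun p hp => mem_NA.2 ((I.CA_sub a C hC).2 p hp)

lemma sub_NP {p : P} {C : Finset A} (hC : C ∈ I.CP p) : C ⊆ I.NP p :=
  fun a ha => mem_NP.2 ((I.CP_sub p C hC).2 a ha)

lemma singA {a : A} {C : Finset P} (hC : C ∈ I.CA a) : ∀ x ∈ C, ({x} : Finset P) ∈ I.CA a :=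
  fun x hx => (I.CA_single a x ((I.CA_sub a C hC).2 x hx)).1

lemma singP {p : P} {C : Finset A} (hC : C ∈ I.CP p) : ∀ x ∈ C, ({x} : Finset A) ∈ I.CP p :=
  fun x hx => (I.CP_single x p ((I.CP_sub p C hC).2 x hx)).1

lemma parA_iff {a : A} {C C' : Finset P} : I.parA a C C' ↔ Par (I.CA a) C C' := Iff.rfl

lemma parP_iff {p : P} {C C' : Finset A} : I.parP p C C' ↔ Par (I.CP p) C C' := Iff.rfl

lemma NA_mem (a : A) : I.NA a ∈ I.CA a := (I.CA_full a).1

lemma NP_mem (p : P) : I.NP p ∈ I.CP p := (I.CP_full p).1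

lemma qNA (a : A) : I.qCA a (I.NA a) = I.qA a := (I.CA_full a).2

lemma qNP (p : P) : I.qCP p (I.NP p) = I.qP p := (I.CP_full p).2

/-- counting a fiber of a matching restricted to a class by a sum over the class -/
lemma card_filter_eq_sumA (M : Finset (A × P)) (a : A) (C : Finset P) (hM : M ⊆ I.E)
    (hC : C ∈ I.CA a) :
    (M.filter fun e => e.1 = a ∧ e.2 ∈ C).card = ∑ p ∈ C, (if (a, p) ∈ M then 1 else 0) := by
  rw [Finset.sum_boole, Nat.cast_id]
  rw [← Finset.card_image_of_injective (C.filter fun p => (a,p) ∈ M)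
    (fun p q h => by simpa using congrArg Prod.snd h : Function.Injective (fun p => (a, p)))]
  congr 1
  ext e
  simp only [Finset.mem_filter, Finset.mem_image]
  constructor
  · rintro ⟨heM, rfl, heC⟩
    exact ⟨e.2, ⟨heC, by simpa using heM⟩, rfl⟩
  · rintro ⟨p, ⟨hpC, hpM⟩, rfl⟩
    exact ⟨hpM, rfl, hpC⟩

lemma card_filter_eq_sumP (M : Finset (A × P)) (p : P) (C : Finset A) (hM : M ⊆ I.E)
    (hC : C ∈ I.CP p) :
    (M.filter fun e => e.2 = p ∧ e.1 ∈ C).card = ∑ a ∈ C, (if (a, p) ∈ M then 1 else 0) := by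
  rw [Finset.sum_boole, Nat.cast_id]
  rw [← Finset.card_image_of_injective (C.filter fun a => (a,p) ∈ M)
    (fun x y h => by simpa using congrArg Prod.fst h : Function.Injective (fun a => (a, p)))]
  congr 1
  ext e
  simp only [Finset.mem_filter, Finset.mem_image]
  constructor
  · rintro ⟨heM, rfl, heC⟩
    exact ⟨e.1, ⟨heC, by simpa using heM⟩, rfl⟩
  · rintro ⟨a, ⟨haC, haM⟩, rfl⟩
    exact ⟨haM, rfl, haC⟩

end CMI

/-- Decomposing the vertex type of the flow network. -/
def xvEquiv (A P : Type) : ((Unit ⊕ Unit) ⊕ ((A × Finset P) ⊕ (P × Finset A))) ≃ XV A P where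
  toFun x := match x with
    | .inl (.inl _) => .src
    | .inl (.inr _) => .snk
    | .inr (.inl (a, C)) => .app a C
    | .inr (.inr (p, C)) => .post p C
  invFun v := match v with
    | .src => .inl (.inl ())
    | .snk => .inl (.inr ())
    | .app a C => .inr (.inl (a, C))
    | .post p C => .inr (.inr (p, C))
  left_inv x := by rcases x with (⟨⟩ | ⟨⟩) | (⟨a, C⟩ | ⟨p, C⟩) <;> rfl
  right_inv v := by cases v <;> rfl

lemma xv_sum {A P : Type} [Fintype A] [Fintype P] [DecidableEq A] [DecidableEq P]
    (f : XV A P → ℕ) :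
    ∑ v, f v = f .src + f .snk + (∑ a, ∑ C, f (.app a C)) + (∑ p, ∑ C, f (.post p C)) := by
  rw [← Equiv.sum_comp (xvEquiv A P) f]
  simp only [Fintype.sum_sum_type, Fintype.sum_prod_type, xvEquiv, Equiv.coe_fn_mk,
    Fintype.sum_unique]
  ring

namespace CMI

variable {A P : Type} [Fintype A] [Fintype P] [DecidableEq A] [DecidableEq P]
variable {I : CMI A P} {g : XV A P → XV A P → ℕ}

lemma IsFlow.zero (hg : I.IsFlow g) {u v : XV A P} (h : I.cap u v = 0) : g u v = 0 :=
  Nat.le_zero.mp (h ▸ hg.1 u v)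

-- capacity unfolding lemmas
lemma cap_src_app (a : A) (C : Finset P) :
    I.cap .src (.app a C) = if C = I.NA a then I.qA a else 0 := rfl
lemma cap_app_app (a a' : A) (C C' : Finset P) :
    I.cap (.app a C) (.app a' C') = if a = a' ∧ I.parA a C C' then I.qCA a C' else 0 := rfl
lemma cap_app_post (a : A) (p : P) (C : Finset P) (C' : Finset A) :
    I.cap (.app a C) (.post p C') =
      if C = {p} ∧ C' = {a} ∧ (a, p) ∈ I.E then 1 else 0 := rfl
lemma cap_post_post (p p' : P) (C' C : Finset A) :
    I.cap (.post p C') (.post p' C) = if p = p' ∧ I.parP p C C' then I.qCP p C' else 0 := rfl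
lemma cap_post_snk (p : P) (C : Finset A) :
    I.cap (.post p C) .snk = if C = I.NP p then I.qP p else 0 := rfl

/-- Evaluating the inflow of an applicant node. -/
lemma inflow_eval (hg : I.IsFlow g) (a : A) (C : Finset P) :
    (∑ u, g u (.app a C)) = g .src (.app a C) + ∑ C0, g (.app a C0) (.app a C) := by
  rw [xv_sum (fun u => g u (.app a C))]
  have h1 : g .snk (.app a C) = 0 := hg.zero rfl
  have h2 : ∀ p : P, ∀ C0 : Finset A, g (.post p C0) (.app a C) = 0 := fun p C0 => hg.zero rfl
  have h3 : ∑ a' : A, ∑ C0 : Finset P, g (.app a' C0) (.app a C)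
      = ∑ C0 : Finset P, g (.app a C0) (.app a C) := by
    rw [Finset.sum_eq_single_of_mem a (Finset.mem_univ a)]
    intro b _ hb
    exact Finset.sum_eq_zero fun C0 _ => hg.zero (by
      rw [cap_app_app, if_neg]
      rintro ⟨rfl, -⟩; exact hb rfl)
  simp [h1, h2, h3]

/-- Evaluating the outflow of an applicant node. -/
lemma outflow_eval (hg : I.IsFlow g) (a : A) (C : Finset P) :
    (∑ u, g (.app a C) u) =
      (∑ C' : Finset P, g (.app a C) (.app a C')) + ∑ p : P, g (.app a C) (.post p {a}) := by
  rw [xv_sum (fun u => g (.app a C) u)]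
  have h1 : g (.app a C) .src = 0 := hg.zero rfl
  have h2 : g (.app a C) .snk = 0 := hg.zero rfl
  have h3 : ∑ a' : A, ∑ C' : Finset P, g (.app a C) (.app a' C')
      = ∑ C' : Finset P, g (.app a C) (.app a C') := by
    rw [Finset.sum_eq_single_of_mem a (Finset.mem_univ a)]
    intro b _ hb
    exact Finset.sum_eq_zero fun C' _ => hg.zero (by
      rw [cap_app_app, if_neg]
      rintro ⟨rfl, -⟩; exact hb rfl)
  have h4 : ∀ p : P, ∑ C' : Finset A, g (.app a C) (.post p C') = g (.app a C) (.post p {a}) := by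
    intro p
    rw [Finset.sum_eq_single_of_mem {a} (Finset.mem_univ _)]
    intro b _ hb
    exact hg.zero (by
      rw [cap_app_post, if_neg]
      rintro ⟨-, rfl, -⟩; exact hb rfl)
  simp [h1, h2, h3, Finset.sum_congr rfl fun p _ => h4 p]

/-- Key lemma: the inflow of an applicant class node equals the sum of the flows on the
middle edges of its elements. -/
lemma key_app (hg : I.IsFlow g) (hlam : I.Laminar) (a : A) :
    ∀ n, ∀ C : Finset P, C.card ≤ n → C ∈ I.CA a →
      (∑ u, g u (.app a C)) = ∑ p ∈ C, g (.app a {p}) (.post p {a}) := by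
  intro n
  induction n with
  | zero =>
    intro C hcard hC
    have hne := (I.CA_sub a C hC).1
    rw [Finset.card_eq_zero.1 (Nat.le_zero.1 hcard)] at hne
    exact absurd hne (by simp)
  | succ n ih =>
    intro C hcard hC
    have hlamF : Lam (I.CA a) := hlam.1 a
    have hcons := hg.2 (.app a C) (by simp) (by simp)
    rw [hcons, outflow_eval hg a C]
    by_cases hsing : ∃ p0, C = {p0}
    · obtain ⟨p0, rfl⟩ := hsing
      have hchild : ∀ C' : Finset P, g (.app a {p0}) (.app a C') = 0 := by
        intro C'
        refine hg.zero ?_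
        rw [cap_app_app, if_neg]
        rintro ⟨-, hpar⟩
        exact no_child_singleton (fun D hD => (I.CA_sub a D hD).1) (parA_iff.1 hpar)
      have hmid : ∀ p : P, p ≠ p0 → g (.app a {p0}) (.post p {a}) = 0 := by
        intro p hp
        refine hg.zero ?_
        rw [cap_app_post, if_neg]
        rintro ⟨hpp, -, -⟩
        exact hp (Finset.singleton_inj.1 hpp.symm)
      rw [Finset.sum_eq_zero fun C' _ => hchild C',
        Finset.sum_eq_single_of_mem p0 (Finset.mem_univ _) (fun b _ hb => hmid b hb)]
      simp
    · push_neg at hsing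
      have hmid0 : ∀ p : P, g (.app a C) (.post p {a}) = 0 := by
        intro p
        refine hg.zero ?_
        rw [cap_app_post, if_neg]
        rintro ⟨hpp, -, -⟩
        exact hsing p hpp
      rw [Finset.sum_eq_zero fun p _ => hmid0 p, add_zero]
      -- children sum
      have hstep : ∑ C' : Finset P, g (.app a C) (.app a C')
          = ∑ C' ∈ (I.CA a).filter (fun D => Par (I.CA a) C D), g (.app a C) (.app a C') := by
        rw [Finset.sum_filter]
        rw [← Finset.sum_filter, ← Finset.sum_filter_add_sum_filter_not Finset.univ
          (fun D => Par (I.CA a) C D) (fun C' => g (.app a C) (.app a C'))]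
        have : ∑ C' ∈ Finset.univ.filter (fun D => ¬ Par (I.CA a) C D),
            g (.app a C) (.app a C') = 0 := by
          refine Finset.sum_eq_zero fun C' hC' => hg.zero ?_
          rw [cap_app_app, if_neg]
          rintro ⟨-, hpar⟩
          exact (Finset.mem_filter.1 hC').2 (parA_iff.1 hpar)
        rw [this, add_zero]
        apply Finset.sum_congr _ (fun _ _ => rfl)
        ext D
        simp only [Finset.mem_filter, Finset.mem_univ, true_and]
        exact ⟨fun h => ⟨h.2.1, h⟩, fun h => h.2⟩
      rw [hstep]
      have hval : ∀ C' ∈ (I.CA a).filter (fun D => Par (I.CA a) C D),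
          g (.app a C) (.app a C') = ∑ p ∈ C', g (.app a {p}) (.post p {a}) := by
        intro C' hC'
        rw [Finset.mem_filter] at hC'
        have hpar : Par (I.CA a) C C' := hC'.2
        have hsub : C' ⊂ C := hpar.2.2.1
        have hcard' : C'.card ≤ n :=
          Nat.lt_succ_iff.1 (lt_of_lt_of_le (Finset.card_lt_card hsub) hcard)
        rw [← ih C' hcard' hC'.1, inflow_eval hg a C']
        have hsrc : g .src (.app a C') = 0 := by
          refine hg.zero ?_
          rw [cap_src_app, if_neg]
          intro h
          exact (h ▸ hsub).not_subset (sub_NA hC)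
        rw [hsrc, zero_add]
        rw [Finset.sum_eq_single_of_mem C (Finset.mem_univ _)]
        intro b _ hb
        refine hg.zero ?_
        rw [cap_app_app, if_neg]
        rintro ⟨-, hpar'⟩
        exact hb (par_unique (parA_iff.1 hpar') hpar)
      rw [Finset.sum_congr rfl hval]
      exact sum_children hlamF hC (singA hC) hsing _

end CMI

namespace CMI

variable {A P : Type} [Fintype A] [Fintype P] [DecidableEq A] [DecidableEq P]
variable {I : CMI A P} {g : XV A P → XV A P → ℕ}

/-- Evaluating the outflow of a post node. -/
lemma outflow_eval_post (hg : I.IsFlow g) (p : P) (C : Finset A) :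
    (∑ u, g (.post p C) u) =
      (∑ C' : Finset A, g (.post p C) (.post p C')) + g (.post p C) .snk := by
  rw [xv_sum (fun u => g (.post p C) u)]
  have h1 : g (.post p C) .src = 0 := hg.zero rfl
  have h2 : ∀ a : A, ∀ C0 : Finset P, g (.post p C) (.app a C0) = 0 := fun a C0 => hg.zero rfl
  have h3 : ∑ p' : P, ∑ C' : Finset A, g (.post p C) (.post p' C')
      = ∑ C' : Finset A, g (.post p C) (.post p C') := by
    rw [Finset.sum_eq_single_of_mem p (Finset.mem_univ p)]
    intro b _ hb
    exact Finset.sum_eq_zero fun C' _ => hg.zero (by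
      rw [cap_post_post, if_neg]
      rintro ⟨rfl, -⟩; exact hb rfl)
  simp [h1, h2, h3]
  ring

/-- Evaluating the inflow of a post node. -/
lemma inflow_eval_post (hg : I.IsFlow g) (p : P) (C : Finset A) :
    (∑ u, g u (.post p C)) =
      (∑ C0 : Finset A, g (.post p C0) (.post p C)) + ∑ a : A, g (.app a {p}) (.post p C) := by
  rw [xv_sum (fun u => g u (.post p C))]
  have h1 : g .src (.post p C) = 0 := hg.zero rfl
  have h2 : g .snk (.post p C) = 0 := hg.zero rfl
  have h3 : ∑ p' : P, ∑ C0 : Finset A, g (.post p' C0) (.post p C)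
      = ∑ C0 : Finset A, g (.post p C0) (.post p C) := by
    rw [Finset.sum_eq_single_of_mem p (Finset.mem_univ p)]
    intro b _ hb
    exact Finset.sum_eq_zero fun C0 _ => hg.zero (by
      rw [cap_post_post, if_neg]
      rintro ⟨rfl, -⟩; exact hb rfl)
  have h4 : ∀ a : A, ∑ C0 : Finset P, g (.app a C0) (.post p C) = g (.app a {p}) (.post p C) := by
    intro a
    rw [Finset.sum_eq_single_of_mem {p} (Finset.mem_univ _)]
    intro b _ hb
    exact hg.zero (by
      rw [cap_app_post, if_neg]
      rintro ⟨rfl, -⟩; exact hb rfl)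
  simp only [Finset.sum_congr rfl fun a (_ : a ∈ Finset.univ) => h4 a, h1, h2, h3, zero_add,
    add_zero]
  ring

/-- Key lemma, post side. -/
lemma key_post (hg : I.IsFlow g) (hlam : I.Laminar) (p : P) :
    ∀ n, ∀ C : Finset A, C.card ≤ n → C ∈ I.CP p →
      (∑ u, g (.post p C) u) = ∑ a ∈ C, g (.app a {p}) (.post p {a}) := by
  intro n
  induction n with
  | zero =>
    intro C hcard hC
    have hne := (I.CP_sub p C hC).1
    rw [Finset.card_eq_zero.1 (Nat.le_zero.1 hcard)] at hne
    exact absurd hne (by simp)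
  | succ n ih =>
    intro C hcard hC
    have hlamF : Lam (I.CP p) := hlam.2 p
    have hcons := hg.2 (.post p C) (by simp) (by simp)
    rw [← hcons, inflow_eval_post hg p C]
    by_cases hsing : ∃ a0, C = {a0}
    · obtain ⟨a0, rfl⟩ := hsing
      have hchild : ∀ C0 : Finset A, g (.post p C0) (.post p {a0}) = 0 := by
        intro C0
        refine hg.zero ?_
        rw [cap_post_post, if_neg]
        rintro ⟨-, hpar⟩
        exact no_child_singleton (fun D hD => (I.CP_sub p D hD).1) (parP_iff.1 hpar)
      have hmid : ∀ a : A, a ≠ a0 → g (.app a {p}) (.post p {a0}) = 0 := by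
        intro a ha
        refine hg.zero ?_
        rw [cap_app_post, if_neg]
        rintro ⟨-, haa, -⟩
        exact ha (Finset.singleton_inj.1 haa.symm)
      rw [Finset.sum_eq_zero fun C0 _ => hchild C0,
        Finset.sum_eq_single_of_mem a0 (Finset.mem_univ _) (fun b _ hb => hmid b hb)]
      simp
    · push_neg at hsing
      have hmid0 : ∀ a : A, g (.app a {p}) (.post p C) = 0 := by
        intro a
        refine hg.zero ?_
        rw [cap_app_post, if_neg]
        rintro ⟨-, haa, -⟩
        exact hsing a haa
      rw [Finset.sum_eq_zero fun a _ => hmid0 a, add_zero]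
      have hstep : ∑ C0 : Finset A, g (.post p C0) (.post p C)
          = ∑ C0 ∈ (I.CP p).filter (fun D => Par (I.CP p) C D), g (.post p C0) (.post p C) := by
        rw [← Finset.sum_filter_add_sum_filter_not Finset.univ
          (fun D => Par (I.CP p) C D) (fun C0 => g (.post p C0) (.post p C))]
        have hz : ∑ C0 ∈ Finset.univ.filter (fun D => ¬ Par (I.CP p) C D),
            g (.post p C0) (.post p C) = 0 := by
          refine Finset.sum_eq_zero fun C0 hC0 => hg.zero ?_
          rw [cap_post_post, if_neg]
          rintro ⟨-, hpar⟩
          exact (Finset.mem_filter.1 hC0).2 (parP_iff.1 hpar)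
        rw [hz, add_zero]
        apply Finset.sum_congr _ (fun _ _ => rfl)
        ext D
        simp only [Finset.mem_filter, Finset.mem_univ, true_and]
        exact ⟨fun h => ⟨h.2.1, h⟩, fun h => h.2⟩
      rw [hstep]
      have hval : ∀ C0 ∈ (I.CP p).filter (fun D => Par (I.CP p) C D),
          g (.post p C0) (.post p C) = ∑ a ∈ C0, g (.app a {p}) (.post p {a}) := by
        intro C0 hC0
        rw [Finset.mem_filter] at hC0
        have hpar : Par (I.CP p) C C0 := hC0.2
        have hsub : C0 ⊂ C := hpar.2.2.1
        have hcard' : C0.card ≤ n :=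
          Nat.lt_succ_iff.1 (lt_of_lt_of_le (Finset.card_lt_card hsub) hcard)
        rw [← ih C0 hcard' hC0.1, outflow_eval_post hg p C0]
        have hsnk : g (.post p C0) .snk = 0 := by
          refine hg.zero ?_
          rw [cap_post_snk, if_neg]
          intro h
          exact (h ▸ hsub).not_subset (sub_NP hC)
        rw [hsnk, add_zero]
        rw [Finset.sum_eq_single_of_mem C (Finset.mem_univ _)]
        intro b _ hb
        refine hg.zero ?_
        rw [cap_post_post, if_neg]
        rintro ⟨-, hpar'⟩
        exact hb (par_unique (parP_iff.1 hpar') hpar)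
      rw [Finset.sum_congr rfl hval]
      exact sum_children hlamF hC (singP hC) hsing _

end CMI

namespace CMI

variable {A P : Type} [Fintype A] [Fintype P] [DecidableEq A] [DecidableEq P]
variable {I : CMI A P} {g : XV A P → XV A P → ℕ}

lemma inflow_le (hg : I.IsFlow g) (hlam : I.Laminar) (a : A) {C : Finset P}
    (hC : C ∈ I.CA a) : (∑ u, g u (.app a C)) ≤ I.qCA a C := by
  rw [inflow_eval hg a C]
  by_cases h : C = I.NA a
  · subst h
    have hpar : ∑ C0 : Finset P, g (.app a C0) (.app a (I.NA a)) = 0 := by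
      refine Finset.sum_eq_zero fun C0 _ => hg.zero ?_
      rw [cap_app_app, if_neg]
      rintro ⟨-, hpar⟩
      exact no_par_top (fun X hX => sub_NA hX) (parA_iff.1 hpar)
    rw [hpar, add_zero, qNA]
    exact le_trans (hg.1 _ _) (by rw [cap_src_app, if_pos rfl])
  · have hsrc : g .src (.app a C) = 0 := hg.zero (by rw [cap_src_app, if_neg h])
    rw [hsrc, zero_add]
    obtain ⟨C0, hC0⟩ := par_exists (hlam.1 a) hC (I.CA_sub a C hC).1 (NA_mem a)
      (Finset.ssubset_iff_subset_ne.2 ⟨sub_NA hC, h⟩)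
    rw [Finset.sum_eq_single_of_mem C0 (Finset.mem_univ _)]
    · exact le_trans (hg.1 _ _) (by rw [cap_app_app]; split <;> simp)
    · intro b _ hb
      refine hg.zero ?_
      rw [cap_app_app, if_neg]
      rintro ⟨-, hpar'⟩
      exact hb (par_unique (parA_iff.1 hpar') hC0)

lemma outflow_le (hg : I.IsFlow g) (hlam : I.Laminar) (p : P) {C : Finset A}
    (hC : C ∈ I.CP p) : (∑ u, g (.post p C) u) ≤ I.qCP p C := by
  rw [outflow_eval_post hg p C]
  by_cases h : C = I.NP p
  · subst h
    have hpar : ∑ C' : Finset A, g (.post p (I.NP p)) (.post p C') = 0 := by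
      refine Finset.sum_eq_zero fun C' _ => hg.zero ?_
      rw [cap_post_post, if_neg]
      rintro ⟨-, hpar⟩
      exact no_par_top (fun X hX => sub_NP hX) (parP_iff.1 hpar)
    rw [hpar, zero_add, qNP]
    exact le_trans (hg.1 _ _) (by rw [cap_post_snk, if_pos rfl])
  · have hsnk : g (.post p C) .snk = 0 := hg.zero (by rw [cap_post_snk, if_neg h])
    rw [hsnk, add_zero]
    obtain ⟨C0, hC0⟩ := par_exists (hlam.2 p) hC (I.CP_sub p C hC).1 (NP_mem p)
      (Finset.ssubset_iff_subset_ne.2 ⟨sub_NP hC, h⟩)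
    rw [Finset.sum_eq_single_of_mem C0 (Finset.mem_univ _)]
    · exact le_trans (hg.1 _ _) (by rw [cap_post_post]; split <;> simp)
    · intro b _ hb
      refine hg.zero ?_
      rw [cap_post_post, if_neg]
      rintro ⟨-, hpar'⟩
      exact hb (par_unique (parP_iff.1 hpar') hC0)

lemma mid_le_one (hg : I.IsFlow g) (a : A) (p : P) :
    g (.app a {p}) (.post p {a}) ≤ 1 :=
  le_trans (hg.1 _ _) (by rw [cap_app_post]; split <;> simp)

lemma E_fiberA (I : CMI A P) (a : A) :
    I.E.filter (fun e => e.1 = a) = (I.NA a).image (fun p => (a, p)) := by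
  ext e
  simp only [Finset.mem_filter, Finset.mem_image, mem_NA]
  constructor
  · rintro ⟨he, rfl⟩
    exact ⟨e.2, by rwa [Prod.mk.eta], by rw [Prod.mk.eta]⟩
  · rintro ⟨p, hp, rfl⟩
    exact ⟨hp, rfl⟩

/-- Part 2 of the theorem. -/
lemma part2 (hlam : I.Laminar) (hg : I.IsFlow g) :
    I.Feasible (I.E.filter fun e => g (.app e.1 {e.2}) (.post e.2 {e.1}) = 1) ∧
      (I.E.filter fun e => g (.app e.1 {e.2}) (.post e.2 {e.1}) = 1).card = I.value g := by
  set M := I.E.filter (fun e => g (.app e.1 {e.2}) (.post e.2 {e.1}) = 1) with hMdef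
  have hME : M ⊆ I.E := Finset.filter_subset _ _
  have hmem : ∀ a p, (a, p) ∈ I.E →
      ((a, p) ∈ M ↔ g (.app a {p}) (.post p {a}) = 1) := by
    intro a p hE
    rw [hMdef, Finset.mem_filter]
    exact ⟨fun h => h.2, fun h => ⟨hE, h⟩⟩
  have hite : ∀ a p, (a, p) ∈ I.E →
      (if (a, p) ∈ M then 1 else 0) = g (.app a {p}) (.post p {a}) := by
    intro a p hE
    have h1 := mid_le_one hg a p
    by_cases h : g (.app a {p}) (.post p {a}) = 1
    · rw [if_pos ((hmem a p hE).2 h), h]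
    · rw [if_neg (fun hm => h ((hmem a p hE).1 hm))]
      omega
  constructor
  · refine ⟨hME, ?_, ?_⟩
    · intro a C hC
      rw [card_filter_eq_sumA M a C hME hC,
        Finset.sum_congr rfl fun p hp => hite a p ((I.CA_sub a C hC).2 p hp),
        ← key_app hg hlam a C.card C le_rfl hC]
      exact inflow_le hg hlam a hC
    · intro p C hC
      rw [card_filter_eq_sumP M p C hME hC,
        Finset.sum_congr rfl fun a ha => hite a p ((I.CP_sub p C hC).2 a ha),
        ← key_post hg hlam p C.card C le_rfl hC]
      exact outflow_le hg hlam p hC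
  · -- cardinality equals value
    have hval : I.value g = ∑ a : A, g .src (.app a (I.NA a)) := by
      rw [value, xv_sum (fun v => g .src v)]
      have h1 : g .src .src = 0 := hg.zero rfl
      have h2 : g .src .snk = 0 := hg.zero rfl
      have h3 : ∀ p : P, ∀ C : Finset A, g .src (.post p C) = 0 := fun p C => hg.zero rfl
      have h4 : ∀ a : A, ∑ C : Finset P, g .src (.app a C) = g .src (.app a (I.NA a)) := by
        intro a
        rw [Finset.sum_eq_single_of_mem (I.NA a) (Finset.mem_univ _)]
        intro b _ hb
        exact hg.zero (by rw [cap_src_app, if_neg hb])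
      simp [h1, h2, h3, Finset.sum_congr rfl fun a (_ : a ∈ Finset.univ) => h4 a]
    have hroot : ∀ a : A, g .src (.app a (I.NA a)) =
        ∑ p ∈ I.NA a, g (.app a {p}) (.post p {a}) := by
      intro a
      rw [← key_app hg hlam a (I.NA a).card (I.NA a) le_rfl (NA_mem a), inflow_eval hg a _]
      have hpar : ∑ C0 : Finset P, g (.app a C0) (.app a (I.NA a)) = 0 := by
        refine Finset.sum_eq_zero fun C0 _ => hg.zero ?_
        rw [cap_app_app, if_neg]
        rintro ⟨-, hpar⟩
        exact no_par_top (fun X hX => sub_NA hX) (parA_iff.1 hpar)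
      rw [hpar, add_zero]
    have hfib : ∀ a : A, ∑ p ∈ I.NA a, g (.app a {p}) (.post p {a})
        = ∑ e ∈ I.E.filter (fun e => e.1 = a), g (.app e.1 {e.2}) (.post e.2 {e.1}) := by
      intro a
      rw [E_fiberA I a, Finset.sum_image (fun x _ y _ h => by simpa using congrArg Prod.snd h)]
    have hsum : I.value g = ∑ e ∈ I.E, g (.app e.1 {e.2}) (.post e.2 {e.1}) := by
      rw [hval, Finset.sum_congr rfl fun a (_ : a ∈ Finset.univ) => (hroot a).trans (hfib a)]
      exact Finset.sum_fiberwise_of_maps_to (fun e _ => Finset.mem_univ e.1) _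
    rw [hsum]
    rw [Finset.sum_congr rfl (fun e (he : e ∈ I.E) => (hite e.1 e.2 (by rwa [Prod.mk.eta])).symm)]
    rw [Finset.sum_boole, Nat.cast_id]
    have hfil : (I.E.filter fun e => (e.1, e.2) ∈ M) = M := by
      ext e
      simp only [Finset.mem_filter, Prod.mk.eta]
      exact ⟨fun h => h.2, fun h => ⟨hME h, h⟩⟩
    rw [hfil]

end CMI

namespace CMI

variable {A P : Type} [Fintype A] [Fintype P] [DecidableEq A] [DecidableEq P]
variable {I : CMI A P}

/-- The flow associated to a feasible matching. -/
noncomputable def flowOf (I : CMI A P) (M : Finset (A × P)) : XV A P → XV A P → ℕ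
  | .src, .app a C => if C = I.NA a then (M.filter fun e => e.1 = a).card else 0
  | .app a C, .app a' C' =>
      if a = a' ∧ I.parA a C C' then (M.filter fun e => e.1 = a ∧ e.2 ∈ C').card else 0
  | .app a C, .post p C' =>
      if C = {p} ∧ C' = {a} ∧ (a, p) ∈ I.E ∧ (a, p) ∈ M then 1 else 0
  | .post p C', .post p' C =>
      if p = p' ∧ I.parP p C C' then (M.filter fun e => e.2 = p ∧ e.1 ∈ C').card else 0
  | .post p C, .snk => if C = I.NP p then (M.filter fun e => e.2 = p).card else 0
  | _, _ => 0

variable {M : Finset (A × P)}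

lemma flowOf_src_app (a : A) (C : Finset P) : flowOf I M .src (.app a C)
    = if C = I.NA a then (M.filter fun e => e.1 = a).card else 0 := rfl
lemma flowOf_app_app (a a' : A) (C C' : Finset P) : flowOf I M (.app a C) (.app a' C')
    = if a = a' ∧ I.parA a C C' then (M.filter fun e => e.1 = a ∧ e.2 ∈ C').card else 0 := rfl
lemma flowOf_app_post (a : A) (p : P) (C : Finset P) (C' : Finset A) :
    flowOf I M (.app a C) (.post p C')
    = if C = {p} ∧ C' = {a} ∧ (a, p) ∈ I.E ∧ (a, p) ∈ M then 1 else 0 := rfl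
lemma flowOf_post_post (p p' : P) (C' C : Finset A) : flowOf I M (.post p C') (.post p' C)
    = if p = p' ∧ I.parP p C C' then (M.filter fun e => e.2 = p ∧ e.1 ∈ C').card else 0 := rfl
lemma flowOf_post_snk (p : P) (C : Finset A) : flowOf I M (.post p C) .snk
    = if C = I.NP p then (M.filter fun e => e.2 = p).card else 0 := rfl

lemma filter_fst_eq (hME : M ⊆ I.E) (a : A) :
    M.filter (fun e => e.1 = a) = M.filter (fun e => e.1 = a ∧ e.2 ∈ I.NA a) := by
  ext e
  simp only [Finset.mem_filter, and_congr_right_iff]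
  intro he
  constructor
  · rintro rfl
    exact ⟨rfl, mem_NA.2 (by rw [Prod.mk.eta]; exact hME he)⟩
  · exact fun h => h.1

lemma filter_snd_eq (hME : M ⊆ I.E) (p : P) :
    M.filter (fun e => e.2 = p) = M.filter (fun e => e.2 = p ∧ e.1 ∈ I.NP p) := by
  ext e
  simp only [Finset.mem_filter, and_congr_right_iff]
  intro he
  constructor
  · rintro rfl
    exact ⟨rfl, mem_NP.2 (by rw [Prod.mk.eta]; exact hME he)⟩
  · exact fun h => h.1

lemma flowOf_le_cap (hfeas : I.Feasible M) : ∀ u v, flowOf I M u v ≤ I.cap u v := by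
  have hME := hfeas.1
  intro u v
  cases u <;> cases v <;> (try exact le_refl 0)
  case src.app a C =>
    rw [flowOf_src_app, cap_src_app]
    split_ifs with h
    · rw [filter_fst_eq hME, ← qNA (I := I) a]
      exact hfeas.2.1 a (I.NA a) (NA_mem a)
    · exact le_refl 0
  case app.app a C a' C' =>
    rw [flowOf_app_app, cap_app_app]
    split_ifs with h
    · exact hfeas.2.1 a C' h.2.2.1
    · exact le_refl 0
  case app.post a C p C' =>
    rw [flowOf_app_post, cap_app_post]
    split_ifs with h1 h2 h2
    · exact le_refl 1
    · exact absurd ⟨h1.1, h1.2.1, h1.2.2.1⟩ h2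
    · exact Nat.zero_le 1
    · exact le_refl 0
  case post.post p C' p' C =>
    rw [flowOf_post_post, cap_post_post]
    split_ifs with h
    · exact hfeas.2.2 p C' h.2.2.1
    · exact le_refl 0
  case post.snk p C =>
    rw [flowOf_post_snk, cap_post_snk]
    split_ifs with h
    · rw [filter_snd_eq hME, ← qNP (I := I) p]
      exact hfeas.2.2 p (I.NP p) (NP_mem p)
    · exact le_refl 0

lemma flowOf_cons_app (hlam : I.Laminar) (hfeas : I.Feasible M) (a : A) (C : Finset P) :
    (∑ u, flowOf I M u (.app a C)) = ∑ u, flowOf I M (.app a C) u := by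
  have hME := hfeas.1
  have hlamF : Lam (I.CA a) := hlam.1 a
  have hL : (∑ u, flowOf I M u (.app a C))
      = (if C = I.NA a then (M.filter fun e => e.1 = a).card else 0)
        + ∑ C0 : Finset P,
            (if I.parA a C0 C then (M.filter fun e => e.1 = a ∧ e.2 ∈ C).card else 0) := by
    rw [xv_sum (fun u => flowOf I M u (.app a C))]
    have e2 : ∀ p : P, ∀ C0 : Finset A, flowOf I M (.post p C0) (.app a C) = 0 :=
      fun _ _ => rfl
    have e3 : ∑ a' : A, ∑ C0 : Finset P, flowOf I M (.app a' C0) (.app a C)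
        = ∑ C0 : Finset P,
            (if I.parA a C0 C then (M.filter fun e => e.1 = a ∧ e.2 ∈ C).card else 0) := by
      rw [Finset.sum_eq_single_of_mem a (Finset.mem_univ a)]
      · refine Finset.sum_congr rfl fun C0 _ => ?_
        rw [flowOf_app_app]
        simp
      · intro b _ hb
        refine Finset.sum_eq_zero fun C0 _ => ?_
        rw [flowOf_app_app, if_neg]
        rintro ⟨rfl, -⟩; exact hb rfl
    rw [e3]
    show flowOf I M .src (.app a C) + flowOf I M .snk (.app a C) + _ + _ = _
    rw [flowOf_src_app]
    simp [e2, show flowOf I M XV.snk (XV.app a C) = 0 from rfl]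
  have hR : (∑ u, flowOf I M (.app a C) u)
      = (∑ C' : Finset P,
            (if I.parA a C C' then (M.filter fun e => e.1 = a ∧ e.2 ∈ C').card else 0))
        + ∑ p : P, ∑ C' : Finset A, flowOf I M (.app a C) (.post p C') := by
    rw [xv_sum (fun u => flowOf I M (.app a C) u)]
    have e6 : ∑ a' : A, ∑ C' : Finset P, flowOf I M (.app a C) (.app a' C')
        = ∑ C' : Finset P,
            (if I.parA a C C' then (M.filter fun e => e.1 = a ∧ e.2 ∈ C').card else 0) := by
      rw [Finset.sum_eq_single_of_mem a (Finset.mem_univ a)]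
      · refine Finset.sum_congr rfl fun C' _ => ?_
        rw [flowOf_app_app]
        simp
      · intro b _ hb
        refine Finset.sum_eq_zero fun C' _ => ?_
        rw [flowOf_app_app, if_neg]
        rintro ⟨rfl, -⟩; exact hb rfl
    rw [e6]
    show flowOf I M (.app a C) .src + flowOf I M (.app a C) .snk + _ + _ = _
    simp [show flowOf I M (XV.app a C) XV.src = 0 from rfl,
      show flowOf I M (XV.app a C) XV.snk = 0 from rfl]
  rw [hL, hR]
  by_cases hC : C ∈ I.CA a
  · -- both sides equal m C
    have hLval : (if C = I.NA a then (M.filter fun e => e.1 = a).card else 0)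
        + (∑ C0 : Finset P,
            (if I.parA a C0 C then (M.filter fun e => e.1 = a ∧ e.2 ∈ C).card else 0))
        = (M.filter fun e => e.1 = a ∧ e.2 ∈ C).card := by
      by_cases h : C = I.NA a
      · rw [if_pos h, Finset.sum_eq_zero, add_zero]
        · rw [filter_fst_eq hME, h]
        · intro C0 _
          rw [if_neg]
          intro hpar
          exact no_par_top (fun X hX => h ▸ sub_NA hX) (parA_iff.1 hpar)
      · rw [if_neg h, zero_add]
        obtain ⟨C0, hC0⟩ := par_exists hlamF hC (I.CA_sub a C hC).1 (NA_mem a)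
          (Finset.ssubset_iff_subset_ne.2 ⟨sub_NA hC, h⟩)
        rw [Finset.sum_eq_single_of_mem C0 (Finset.mem_univ _)]
        · rw [if_pos (show I.parA a C0 C from hC0)]
        · intro b _ hb
          rw [if_neg]
          intro hpar
          exact hb (par_unique (parA_iff.1 hpar) hC0)
    rw [hLval]
    by_cases hsing : ∃ p0, C = {p0}
    · obtain ⟨p0, rfl⟩ := hsing
      have hE0 : (a, p0) ∈ I.E := (I.CA_sub a {p0} hC).2 p0 (Finset.mem_singleton_self p0)
      have hch : ∑ C' : Finset P,
          (if I.parA a {p0} C' then (M.filter fun e => e.1 = a ∧ e.2 ∈ C').card else 0) = 0 := by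
        refine Finset.sum_eq_zero fun C' _ => ?_
        rw [if_neg]
        intro hpar
        exact no_child_singleton (fun D hD => (I.CA_sub a D hD).1) (parA_iff.1 hpar)
      have hmidsum : ∑ p : P, ∑ C' : Finset A, flowOf I M (.app a {p0}) (.post p C')
          = if (a, p0) ∈ M then 1 else 0 := by
        rw [Finset.sum_eq_single_of_mem p0 (Finset.mem_univ _)]
        · rw [Finset.sum_eq_single_of_mem {a} (Finset.mem_univ _)]
          · rw [flowOf_app_post]
            simp [hE0]
          · intro b _ hb
            rw [flowOf_app_post, if_neg]
            rintro ⟨-, rfl, -⟩; exact hb rfl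
        · intro b _ hb
          refine Finset.sum_eq_zero fun C' _ => ?_
          rw [flowOf_app_post, if_neg]
          rintro ⟨hpp, -⟩
          exact hb (Finset.singleton_inj.1 hpp).symm
      rw [hch, hmidsum, zero_add, card_filter_eq_sumA M a {p0} hME hC, Finset.sum_singleton]
    · push_neg at hsing
      have hmid0 : ∑ p : P, ∑ C' : Finset A, flowOf I M (.app a C) (.post p C') = 0 := by
        refine Finset.sum_eq_zero fun p _ => Finset.sum_eq_zero fun C' _ => ?_
        rw [flowOf_app_post, if_neg]
        rintro ⟨hpp, -⟩
        exact hsing p hpp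
      rw [hmid0, add_zero]
      have hstep : ∑ C' : Finset P,
          (if I.parA a C C' then (M.filter fun e => e.1 = a ∧ e.2 ∈ C').card else 0)
          = ∑ C' ∈ (I.CA a).filter (fun D => Par (I.CA a) C D),
              (M.filter fun e => e.1 = a ∧ e.2 ∈ C').card := by
        rw [Finset.sum_filter]
        rw [Finset.sum_congr rfl (fun C' (_ : C' ∈ (I.CA a)) => rfl)]
        rw [← Finset.sum_filter, ← Finset.sum_filter]
        apply Finset.sum_congr _ (fun _ _ => rfl)
        ext D
        simp only [Finset.mem_filter, Finset.mem_univ, true_and]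
        exact ⟨fun h => ⟨h.2.1, h⟩, fun h => h.2⟩
      rw [hstep]
      have hval : ∀ C' ∈ (I.CA a).filter (fun D => Par (I.CA a) C D),
          (M.filter fun e => e.1 = a ∧ e.2 ∈ C').card
            = ∑ p ∈ C', (if (a, p) ∈ M then 1 else 0) := by
        intro C' hC'
        exact card_filter_eq_sumA M a C' hME (Finset.mem_filter.1 hC').1
      rw [Finset.sum_congr rfl hval, sum_children hlamF hC (singA hC) hsing,
        card_filter_eq_sumA M a C hME hC]
  · -- both sides are zero
    have h1 : C ≠ I.NA a := fun h => hC (h ▸ NA_mem a)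
    have h2 : ∀ C0 : Finset P, ¬ I.parA a C0 C := fun C0 hpar => hC hpar.2.1
    have h3 : ∀ C' : Finset P, ¬ I.parA a C C' := fun C' hpar => hC hpar.1
    have h4 : ∀ p : P, ∀ C' : Finset A, flowOf I M (.app a C) (.post p C') = 0 := by
      intro p C'
      rw [flowOf_app_post, if_neg]
      rintro ⟨rfl, -, hE, -⟩
      exact hC (I.CA_single a p hE).1
    simp [h1, h2, h3, h4]

end CMI

namespace CMI

variable {A P : Type} [Fintype A] [Fintype P] [DecidableEq A] [DecidableEq P]
variable {I : CMI A P} {M : Finset (A × P)}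

lemma flowOf_cons_post (hlam : I.Laminar) (hfeas : I.Feasible M) (p : P) (C : Finset A) :
    (∑ u, flowOf I M u (.post p C)) = ∑ u, flowOf I M (.post p C) u := by
  have hME := hfeas.1
  have hlamF : Lam (I.CP p) := hlam.2 p
  have hL : (∑ u, flowOf I M u (.post p C))
      = (∑ C0 : Finset A,
            (if I.parP p C C0 then (M.filter fun e => e.2 = p ∧ e.1 ∈ C0).card else 0))
        + ∑ a : A, ∑ C0 : Finset P, flowOf I M (.app a C0) (.post p C) := by
    rw [xv_sum (fun u => flowOf I M u (.post p C))]
    have e3 : ∑ p' : P, ∑ C0 : Finset A, flowOf I M (.post p' C0) (.post p C)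
        = ∑ C0 : Finset A,
            (if I.parP p C C0 then (M.filter fun e => e.2 = p ∧ e.1 ∈ C0).card else 0) := by
      rw [Finset.sum_eq_single_of_mem p (Finset.mem_univ p)]
      · refine Finset.sum_congr rfl fun C0 _ => ?_
        rw [flowOf_post_post]
        simp
      · intro b _ hb
        refine Finset.sum_eq_zero fun C0 _ => ?_
        rw [flowOf_post_post, if_neg]
        rintro ⟨rfl, -⟩; exact hb rfl
    rw [e3]
    show flowOf I M .src (.post p C) + flowOf I M .snk (.post p C) + _ + _ = _
    simp [show flowOf I M XV.src (XV.post p C) = 0 from rfl,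
      show flowOf I M XV.snk (XV.post p C) = 0 from rfl]
    ring
  have hR : (∑ u, flowOf I M (.post p C) u)
      = (∑ C' : Finset A,
            (if I.parP p C' C then (M.filter fun e => e.2 = p ∧ e.1 ∈ C).card else 0))
        + (if C = I.NP p then (M.filter fun e => e.2 = p).card else 0) := by
    rw [xv_sum (fun u => flowOf I M (.post p C) u)]
    have e6 : ∑ p' : P, ∑ C' : Finset A, flowOf I M (.post p C) (.post p' C')
        = ∑ C' : Finset A,
            (if I.parP p C' C then (M.filter fun e => e.2 = p ∧ e.1 ∈ C).card else 0) := by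
      rw [Finset.sum_eq_single_of_mem p (Finset.mem_univ p)]
      · refine Finset.sum_congr rfl fun C' _ => ?_
        rw [flowOf_post_post]
        simp
      · intro b _ hb
        refine Finset.sum_eq_zero fun C' _ => ?_
        rw [flowOf_post_post, if_neg]
        rintro ⟨rfl, -⟩; exact hb rfl
    rw [e6]
    show flowOf I M (.post p C) .src + flowOf I M (.post p C) .snk + _ + _ = _
    rw [flowOf_post_snk]
    simp [show flowOf I M (XV.post p C) XV.src = 0 from rfl,
      show ∀ a : A, ∀ C0 : Finset P, flowOf I M (XV.post p C) (XV.app a C0) = 0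
        from fun _ _ => rfl]
    ring
  rw [hL, hR]
  by_cases hC : C ∈ I.CP p
  · have hRval : (∑ C' : Finset A,
          (if I.parP p C' C then (M.filter fun e => e.2 = p ∧ e.1 ∈ C).card else 0))
        + (if C = I.NP p then (M.filter fun e => e.2 = p).card else 0)
        = (M.filter fun e => e.2 = p ∧ e.1 ∈ C).card := by
      by_cases h : C = I.NP p
      · rw [if_pos h, Finset.sum_eq_zero, zero_add]
        · rw [filter_snd_eq hME, h]
        · intro C' _
          rw [if_neg]
          intro hpar
          exact no_par_top (fun X hX => h ▸ sub_NP hX) (parP_iff.1 hpar)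
      · rw [if_neg h, add_zero]
        obtain ⟨C0, hC0⟩ := par_exists hlamF hC (I.CP_sub p C hC).1 (NP_mem p)
          (Finset.ssubset_iff_subset_ne.2 ⟨sub_NP hC, h⟩)
        rw [Finset.sum_eq_single_of_mem C0 (Finset.mem_univ _)]
        · rw [if_pos (show I.parP p C0 C from hC0)]
        · intro b _ hb
          rw [if_neg]
          intro hpar
          exact hb (par_unique (parP_iff.1 hpar) hC0)
    rw [hRval]
    by_cases hsing : ∃ a0, C = {a0}
    · obtain ⟨a0, rfl⟩ := hsing
      have hE0 : (a0, p) ∈ I.E := (I.CP_sub p {a0} hC).2 a0 (Finset.mem_singleton_self a0)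
      have hch : ∑ C0 : Finset A,
          (if I.parP p {a0} C0 then (M.filter fun e => e.2 = p ∧ e.1 ∈ C0).card else 0) = 0 := by
        refine Finset.sum_eq_zero fun C0 _ => ?_
        rw [if_neg]
        intro hpar
        exact no_child_singleton (fun D hD => (I.CP_sub p D hD).1) (parP_iff.1 hpar)
      have hmidsum : ∑ a : A, ∑ C0 : Finset P, flowOf I M (.app a C0) (.post p {a0})
          = if (a0, p) ∈ M then 1 else 0 := by
        rw [Finset.sum_eq_single_of_mem a0 (Finset.mem_univ _)]
        · rw [Finset.sum_eq_single_of_mem {p} (Finset.mem_univ _)]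
          · rw [flowOf_app_post]
            simp [hE0]
          · intro b _ hb
            rw [flowOf_app_post, if_neg]
            rintro ⟨rfl, -⟩; exact hb rfl
        · intro b _ hb
          refine Finset.sum_eq_zero fun C0 _ => ?_
          rw [flowOf_app_post, if_neg]
          rintro ⟨-, haa, -⟩
          exact hb (Finset.singleton_inj.1 haa).symm
      rw [hch, hmidsum, zero_add, card_filter_eq_sumP M p {a0} hME hC, Finset.sum_singleton]
    · push_neg at hsing
      have hmid0 : ∑ a : A, ∑ C0 : Finset P, flowOf I M (.app a C0) (.post p C) = 0 := by
        refine Finset.sum_eq_zero fun a _ => Finset.sum_eq_zero fun C0 _ => ?_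
        rw [flowOf_app_post, if_neg]
        rintro ⟨-, haa, -⟩
        exact hsing a haa
      rw [hmid0, add_zero]
      have hstep : ∑ C0 : Finset A,
          (if I.parP p C C0 then (M.filter fun e => e.2 = p ∧ e.1 ∈ C0).card else 0)
          = ∑ C0 ∈ (I.CP p).filter (fun D => Par (I.CP p) C D),
              (M.filter fun e => e.2 = p ∧ e.1 ∈ C0).card := by
        rw [← Finset.sum_filter]
        apply Finset.sum_congr _ (fun _ _ => rfl)
        ext D
        simp only [Finset.mem_filter, Finset.mem_univ, true_and]
        exact ⟨fun h => ⟨h.2.1, h⟩, fun h => h.2⟩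
      rw [hstep]
      have hval : ∀ C0 ∈ (I.CP p).filter (fun D => Par (I.CP p) C D),
          (M.filter fun e => e.2 = p ∧ e.1 ∈ C0).card
            = ∑ a ∈ C0, (if (a, p) ∈ M then 1 else 0) := by
        intro C0 hC0
        exact card_filter_eq_sumP M p C0 hME (Finset.mem_filter.1 hC0).1
      rw [Finset.sum_congr rfl hval, sum_children hlamF hC (singP hC) hsing,
        card_filter_eq_sumP M p C hME hC]
  · have h1 : C ≠ I.NP p := fun h => hC (h ▸ NP_mem p)
    have h2 : ∀ C0 : Finset A, ¬ I.parP p C C0 := fun C0 hpar => hC hpar.1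
    have h3 : ∀ C' : Finset A, ¬ I.parP p C' C := fun C' hpar => hC hpar.2.1
    have h4 : ∀ a : A, ∀ C0 : Finset P, flowOf I M (.app a C0) (.post p C) = 0 := by
      intro a C0
      rw [flowOf_app_post, if_neg]
      rintro ⟨-, rfl, hE, -⟩
      exact hC (I.CP_single a p hE).1
    simp [h1, h2, h3, h4]

lemma flowOf_isFlow (hlam : I.Laminar) (hfeas : I.Feasible M) : I.IsFlow (flowOf I M) := by
  refine ⟨flowOf_le_cap hfeas, ?_⟩
  intro v hsrc hsnk
  cases v with
  | src => exact absurd rfl hsrc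
  | snk => exact absurd rfl hsnk
  | app a C => exact flowOf_cons_app hlam hfeas a C
  | post p C => exact flowOf_cons_post hlam hfeas p C

lemma flowOf_value (hfeas : I.Feasible M) : I.value (flowOf I M) = M.card := by
  rw [value, xv_sum (fun v => flowOf I M .src v)]
  have h4 : ∀ a : A, ∑ C : Finset P, flowOf I M .src (.app a C)
      = (M.filter fun e => e.1 = a).card := by
    intro a
    rw [Finset.sum_eq_single_of_mem (I.NA a) (Finset.mem_univ _)]
    · rw [flowOf_src_app, if_pos rfl]
    · intro b _ hb
      rw [flowOf_src_app, if_neg hb]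
  rw [Finset.sum_congr rfl fun a (_ : a ∈ Finset.univ) => h4 a]
  simp [show flowOf I M XV.src XV.src = 0 from rfl,
    show flowOf I M XV.src XV.snk = 0 from rfl,
    show ∀ p : P, ∀ C : Finset A, flowOf I M XV.src (XV.post p C) = 0 from fun _ _ => rfl]
  exact (Finset.card_eq_sum_card_fiberwise (fun e (_ : e ∈ M) => Finset.mem_univ e.1)).symm

lemma flowOf_mid (a : A) (p : P) (hE : (a, p) ∈ I.E) :
    flowOf I M (.app a {p}) (.post p {a}) = if (a, p) ∈ M then 1 else 0 := by
  rw [flowOf_app_post]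
  simp [hE]

end CMI


end Abstract

/-- for a classified matching instance with laminar classifications,
(1) every feasible matching `M` induces a flow of value `|M|` in the associated flow
network carrying one unit across the edge `((a,{p}),(p,{a}))` exactly when `(a,p) ∈ M`;
and (2) conversely, for every flow `g`, the set of edges across which `g` carries one
unit is a feasible matching whose cardinality is the value of `g`. -/
theorem stmt9 {A P : Type} [Fintype A] [Fintype P] [DecidableEq A] [DecidableEq P]
    (I : CMI A P) (hlam : I.Laminar) :
    (∀ M : Finset (A × P), I.Feasible M →
      ∃ g, I.IsFlow g ∧ I.value g = M.card ∧
        ∀ a p, (a, p) ∈ I.E →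
          g (.app a {p}) (.post p {a}) = if (a, p) ∈ M then 1 else 0) ∧
    (∀ g, I.IsFlow g →
      I.Feasible (I.E.filter fun e => g (.app e.1 {e.2}) (.post e.2 {e.1}) = 1) ∧
      (I.E.filter fun e => g (.app e.1 {e.2}) (.post e.2 {e.1}) = 1).card = I.value g) := by
  constructor
  · intro M hfeas
    exact ⟨CMI.flowOf I M, CMI.flowOf_isFlow hlam hfeas, CMI.flowOf_value hfeas,
      fun a p hE => CMI.flowOf_mid a p hE⟩
  · intro g hg
    exact CMI.part2 hlam hg
end
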